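/- arXiv:2303.12565 — 3 statements merged into one kernel-verified Lean document; each statement's English description precedes it below -/
import Mathlib

section
/- Let M be a virtual model and let α ∈ e_{M̂}. Suppose that the set M ∩ [α,∞) of ordinals of M that are ≥ α is nonempty, and let β be its minimum. Then β ∈ e_M. -/
set_option autoImplicit false

open FirstOrder FirstOrder.Language

namespace VMF

/-- Von Neumann natural numbers as `ZFSet`s. -/
def vN : ℕ → ZFSet.{0}
  | 0 => ∅
  | n + 1 => insert (vN n) (vN n)

/-- A class of sets is transitive. -/
def TransClass (S : Set ZFSet.{0}) : Prop := ∀ ⦃x⦄, x ∈ S → ∀ ⦃y⦄, y ∈ x → y ∈ S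

/-- The transitive closure of a class: the least transitive class containing it. -/
def trclSet (S : Set ZFSet.{0}) : Set ZFSet.{0} :=
  {x | ∀ T : Set ZFSet.{0}, S ⊆ T → TransClass T → x ∈ T}

/-- The class of all sets of rank `< α` (the `α`-th level of the cumulative hierarchy). -/
def Vclass (α : Ordinal.{0}) : Set ZFSet.{0} := {x | ZFSet.rank x < α}

/-- `f` is (extensionally) a function, as a set of Kuratowski pairs. -/
def IsZFun (f : ZFSet.{0}) : Prop :=
  (∀ p ∈ f.toSet, ∃ a b : ZFSet.{0}, p = a.pair b) ∧
    ∀ a b c : ZFSet.{0}, a.pair b ∈ f → a.pair c ∈ f → b = c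

/-- `t` is a finite tuple (a function whose domain is a von Neumann natural number)
with all values in the class `X`. -/
def IsTupleFrom (X : Set ZFSet.{0}) (t : ZFSet.{0}) : Prop :=
  ∃ n : ℕ, (∀ u ∈ t.toSet, ∃ i z : ZFSet.{0}, u = i.pair z ∧ i ∈ vN n ∧ z ∈ X) ∧
    ∀ i : ZFSet.{0}, i ∈ vN n → ∃ z : ZFSet.{0}, i.pair z ∈ t

/-- `Hull(M, X)`: the class of all values `f(x)` where `f ∈ M` is a function and
`x ∈ X^{<ω} ∩ dom f` is a finite tuple from `X`. -/
def HullSet (M : Set ZFSet.{0}) (X : Set ZFSet.{0}) : Set ZFSet.{0} :=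
  {z | ∃ f ∈ M, IsZFun f ∧ ∃ t : ZFSet.{0}, IsTupleFrom X t ∧ t.pair z ∈ f}

/-- The Mostowski collapse map of a class `S`:
`collapse S x = { collapse S y | y ∈ x ∩ S }`. -/
noncomputable def collapse (S : Set ZFSet.{0}) : ZFSet.{0} → ZFSet.{0} :=
  ZFSet.mem_wf.fix fun x ih =>
    let g : ZFSet.{0} → ZFSet.{0} := fun y =>
      @dite _ (y ∈ x) (Classical.dec _) (fun h => ih y h) (fun _ => ∅)
    letI : ZFSet.Definable₁ g := Classical.allZFSetDefinable _
    ZFSet.image g (ZFSet.sep (· ∈ S) x)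

variable (L : FirstOrder.Language)

/-- An `L`-structure whose universe is a class of `ZFSet`s (with `L` relational;
function symbols are treated as relation symbols). -/
structure VModel where
  carrier : Set ZFSet.{0}
  rel : ∀ ⦃n : ℕ⦄, L.Relations n → (Fin n → ZFSet.{0}) → Prop
  rel_dom : ∀ ⦃n : ℕ⦄ (r : L.Relations n) (v : Fin n → ZFSet.{0}),
    rel r v → ∀ i, v i ∈ carrier

variable {L}
variable [L.IsRelational]

/-- Interpretation of a term of a relational language under an assignment. -/
def interpTerm {n : ℕ} (v : Fin n → ZFSet.{0}) : L.Term (Empty ⊕ Fin n) → ZFSet.{0}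
  | .var (Sum.inr i) => v i
  | .var (Sum.inl e) => e.elim
  | .func f _ => isEmptyElim f

/-- Tarski satisfaction for a `VModel`; quantifiers range over the carrier. -/
def VModel.BRealize (M : VModel L) :
    ∀ {n : ℕ}, L.BoundedFormula Empty n → (Fin n → ZFSet.{0}) → Prop
  | _, .falsum, _ => False
  | _, .equal t u, v => interpTerm v t = interpTerm v u
  | _, .rel R ts, v => M.rel R fun i => interpTerm v (ts i)
  | _, .imp φ ψ, v => M.BRealize φ v → M.BRealize ψ v
  | _, .all φ, v => ∀ x ∈ M.carrier, M.BRealize φ (Fin.snoc v x)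

/-- `M` is an elementary substructure of `N` (in particular `M` carries the
structure inherited from `N`). -/
def ElemSub (M N : VModel L) : Prop :=
  M.carrier ⊆ N.carrier ∧
  (∀ ⦃n : ℕ⦄ (r : L.Relations n) (v : Fin n → ZFSet.{0}),
      (∀ i, v i ∈ M.carrier) → (M.rel r v ↔ N.rel r v)) ∧
  ∀ ⦃n : ℕ⦄ (φ : L.BoundedFormula Empty n) (v : Fin n → ZFSet.{0}),
    (∀ i, v i ∈ M.carrier) → (M.BRealize φ v ↔ N.BRealize φ v)

variable (memRel : L.Relations 2)

/-- The distinguished membership symbol is interpreted as true membership. -/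
def MemCorrect (M : VModel L) : Prop :=
  ∀ x y : ZFSet.{0}, x ∈ M.carrier → y ∈ M.carrier → (M.rel memRel ![x, y] ↔ x ∈ y)

/-- Semantic satisfaction of `ZFC⁻` (`ZFC` minus the power set axiom), with the
separation and replacement schemes taken for all formulas of the extended language `L`. -/
def IsZFCminus (M : VModel L) : Prop :=
  -- extensionality
  (∀ x ∈ M.carrier, ∀ y ∈ M.carrier, (∀ z : ZFSet.{0}, z ∈ x ↔ z ∈ y) → x = y) ∧
  -- pairing
  (∀ x ∈ M.carrier, ∀ y ∈ M.carrier, ({x, y} : ZFSet.{0}) ∈ M.carrier) ∧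
  -- union
  (∀ x ∈ M.carrier, ZFSet.sUnion x ∈ M.carrier) ∧
  -- infinity
  ZFSet.omega ∈ M.carrier ∧
  -- foundation
  (∀ x ∈ M.carrier, x ≠ ∅ → ∃ y ∈ x.toSet, ∀ z ∈ y.toSet, z ∉ x) ∧
  -- separation scheme
  (∀ (n : ℕ) (φ : L.BoundedFormula Empty (n + 1)) (p : Fin n → ZFSet.{0}),
    (∀ i, p i ∈ M.carrier) → ∀ a ∈ M.carrier,
      ZFSet.sep (fun x => M.BRealize φ (Fin.snoc p x)) a ∈ M.carrier) ∧
  -- replacement scheme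
  (∀ (n : ℕ) (φ : L.BoundedFormula Empty (n + 2)) (p : Fin n → ZFSet.{0}),
    (∀ i, p i ∈ M.carrier) → ∀ a ∈ M.carrier,
      (∀ x ∈ a.toSet, ∃! y, y ∈ M.carrier ∧ M.BRealize φ (Fin.snoc (Fin.snoc p x) y)) →
      ∃ b ∈ M.carrier, ∀ y : ZFSet.{0},
        y ∈ b ↔ ∃ x ∈ a.toSet, M.BRealize φ (Fin.snoc (Fin.snoc p x) y)) ∧
  -- choice
  (∀ a ∈ M.carrier, ∃ f ∈ M.carrier, IsZFun f ∧
    ∀ x : ZFSet.{0}, x ∈ a → x ≠ ∅ → ∃ y : ZFSet.{0}, y ∈ x ∧ x.pair y ∈ f)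

/-- An admissible structure: a transitive set structure satisfying `ZFC⁻`,
with `∈` interpreted as true membership. -/
def Admissible (M : VModel L) : Prop :=
  TransClass M.carrier ∧ (∃ a : ZFSet.{0}, M.carrier = a.toSet) ∧
    MemCorrect memRel M ∧ IsZFCminus M

/-- A virtual model: a structure elementary in some admissible structure. -/
def VirtualModel (M : VModel L) : Prop :=
  ∃ A : VModel L, Admissible memRel A ∧ ElemSub M A

/-- `H` is "the" structure `M̂` on the transitive closure of `M` with `M ≺ H`. -/
def IsHat (M H : VModel L) : Prop :=
  H.carrier = trclSet M.carrier ∧ ElemSub M H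

/-- The restriction (inherited structure) of `A` to the class `S`. -/
def restrictTo (A : VModel L) (S : Set ZFSet.{0}) : VModel L where
  carrier := S ∩ A.carrier
  rel := fun _ r v => A.rel r v ∧ ∀ i, v i ∈ S ∩ A.carrier
  rel_dom := by intro n r v h i; exact h.2 i

/-- `e_A`: the class of (von Neumann) ordinals `α` of `A` such that the restriction
of `A` to rank `< α` is an elementary substructure of `A`. -/
def eSet (A : VModel L) : Set ZFSet.{0} :=
  {a | a ∈ A.carrier ∧ a.IsOrdinal ∧ ElemSub (restrictTo A (Vclass (ZFSet.rank a))) A}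

/-- The `α`-reduction `M↓α`: the image of `M` under the transitive collapse of
`Hull(M, V_α)`, with the transported structure. -/
noncomputable def reduct (M : VModel L) (α : Ordinal.{0}) : VModel L where
  carrier := collapse (HullSet M.carrier (Vclass α)) '' M.carrier
  rel := fun _ r v => ∃ w : Fin _ → ZFSet.{0}, (∀ i, w i ∈ M.carrier) ∧
      (∀ i, collapse (HullSet M.carrier (Vclass α)) (w i) = v i) ∧ M.rel r w
  rel_dom := by
    intro n r v h i
    obtain ⟨w, hw, hc, -⟩ := h
    exact ⟨w i, hw i, hc i⟩

/-- `M` is `α`-generated: `M̂ = Hull(M, V_α)`. -/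
def AlphaGen (M : VModel L) (α : Ordinal.{0}) : Prop :=
  trclSet M.carrier = HullSet M.carrier (Vclass α)

/-- `f` is an isomorphism from `A` onto `B`. -/
def IsIsoOn (A B : VModel L) (f : ZFSet.{0} → ZFSet.{0}) : Prop :=
  Set.BijOn f A.carrier B.carrier ∧
  ∀ ⦃n : ℕ⦄ (r : L.Relations n) (v : Fin n → ZFSet.{0}), (∀ i, v i ∈ A.carrier) →
    (A.rel r v ↔ B.rel r fun i => f (v i))

/-- `M ≅_α N` (`HM`, `HN` being the hats of `M`, `N`): there is an isomorphism
`f : Hull(M, V_α) ≅ Hull(N, V_α)` with `f[M] = N`. -/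
def Cong (α : Ordinal.{0}) (M N HM HN : VModel L) : Prop :=
  ∃ f : ZFSet.{0} → ZFSet.{0},
    IsIsoOn (restrictTo HM (HullSet M.carrier (Vclass α)))
      (restrictTo HN (HullSet N.carrier (Vclass α))) f ∧
    f '' M.carrier = N.carrier

/-- The structure that an element `m` of (the hat) `H` inherits from `H`. -/
def subModel (H : VModel L) (m : ZFSet.{0}) : VModel L := restrictTo H m.toSet

/-- The hat of an element `m` of a transitive `H`: the inherited structure on `trcl(m)`. -/
def subHat (H : VModel L) (m : ZFSet.{0}) : VModel L := restrictTo H (trclSet m.toSet)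

/-- `M ◁_α N`: there is `M' ∈ N` which, with the inherited structure,
is a virtual model with `M ≅_α M'`. -/
def Lhd (α : Ordinal.{0}) (M N HM HN : VModel L) : Prop :=
  ∃ m : ZFSet.{0}, m ∈ N.carrier ∧ VirtualModel memRel (subModel HN m) ∧
    Cong α M (subModel HN m) HM (subHat HN m)

/-- `M` is `ξ`-strong (relative to its hat `H`): `V_ξ ⊆ M̂`. -/
def Strong (ξ : Ordinal.{0}) (H : VModel L) : Prop := Vclass ξ ⊆ H.carrier

/-- `Σ₀` (i.e. `Δ₀`) formulas: formulas all of whose quantifiers are bounded. -/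
inductive IsDelta0 {L : FirstOrder.Language} (memRel : L.Relations 2) :
    ∀ {n : ℕ}, L.BoundedFormula Empty n → Prop
  | falsum {n : ℕ} : IsDelta0 memRel (.falsum : L.BoundedFormula Empty n)
  | equal {n : ℕ} (t u : L.Term (Empty ⊕ Fin n)) : IsDelta0 memRel (.equal t u)
  | rel {n l : ℕ} (R : L.Relations l) (ts : Fin l → L.Term (Empty ⊕ Fin n)) :
      IsDelta0 memRel (.rel R ts)
  | imp {n : ℕ} {φ ψ : L.BoundedFormula Empty n} :
      IsDelta0 memRel φ → IsDelta0 memRel ψ → IsDelta0 memRel (φ.imp ψ)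
  | bforall {n : ℕ} (k : Fin n) {φ : L.BoundedFormula Empty (n + 1)} :
      IsDelta0 memRel φ →
      IsDelta0 memRel
        ((BoundedFormula.rel memRel
            ![Term.var (Sum.inr (Fin.last n)), Term.var (Sum.inr k.castSucc)]).imp φ).all

/-- `Σ₀`-elementary substructure (with the inherited structure). -/
def Delta0ElemSub (M N : VModel L) : Prop :=
  M.carrier ⊆ N.carrier ∧
  (∀ ⦃n : ℕ⦄ (r : L.Relations n) (v : Fin n → ZFSet.{0}),
      (∀ i, v i ∈ M.carrier) → (M.rel r v ↔ N.rel r v)) ∧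
  ∀ ⦃n : ℕ⦄ (φ : L.BoundedFormula Empty n), IsDelta0 memRel φ →
    ∀ v : Fin n → ZFSet.{0}, (∀ i, v i ∈ M.carrier) →
      (M.BRealize φ v ↔ N.BRealize φ v)


/-!
By the Tarski–Vaught test it suffices, for a formula `ψ` with parameters `v` in `M ∩ V_β` and a
witness in `M`, to find a witness in `M ∩ V_β`. Ranks are definable in the admissible `A ≻ M`
(through set-sized rank functions, which `A` contains by `∈`-induction and replacement), so `M`
is closed under `x ↦ rank x`; by the minimality of `β`, the parameters then lie in `V_α`.
The least rank `γ` of a witness of `ψ(v, ·)` is defined in `A` from `v` by a formula with a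
unique solution. That formula, with its uniqueness, transfers to `M` and to `M̂`, and
`M̂↾α ≺ M̂` puts its solution below `α`; so `γ ∈ M`, `γ < α`, and `M` has a witness of rank `γ`.
-/

theorem snoc_comp_succAbove {α : Type*} {n : ℕ} (u : Fin (n + 1) → α) (y : α) :
    Fin.snoc u y ∘ (Fin.last n).castSucc.succAbove = Fin.snoc (Fin.init u) y := by
  ext i
  induction i using Fin.lastCases with
  | last => simp [Fin.succAbove_of_le_castSucc]
  | cast i => simp [Fin.succAbove_of_castSucc_lt, Fin.castSucc_lt_castSucc_iff, Fin.init]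

theorem snoc_mem {n : ℕ} {S : Set ZFSet.{0}} {v : Fin n → ZFSet.{0}} (hv : ∀ i, v i ∈ S)
    {x : ZFSet.{0}} (hx : x ∈ S) (i : Fin (n + 1)) :
    (Fin.snoc v x : Fin (n + 1) → ZFSet.{0}) i ∈ S := by
  induction i using Fin.lastCases <;> simp [hx, hv]

namespace VModel

variable {N : VModel L} {m n : ℕ}

def reindex : ∀ {m n : ℕ}, (Fin m → Fin n) → L.BoundedFormula Empty m → L.BoundedFormula Empty n
  | _, _, _, .falsum => .falsum
  | _, _, σ, .equal t u => .equal (t.relabel (Sum.map id σ)) (u.relabel (Sum.map id σ))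
  | _, _, σ, .rel R ts => .rel R fun i => (ts i).relabel (Sum.map id σ)
  | _, _, σ, .imp φ ψ => (reindex σ φ).imp (reindex σ ψ)
  | _, _, σ, .all φ => (reindex (Fin.lastCases (Fin.last _) (Fin.castSucc ∘ σ)) φ).all

theorem interpTerm_relabel (σ : Fin m → Fin n) (v : Fin n → ZFSet.{0}) :
    ∀ t : L.Term (Empty ⊕ Fin m), interpTerm v (t.relabel (Sum.map id σ)) = interpTerm (v ∘ σ) t
  | .var (Sum.inr _) => rfl
  | .var (Sum.inl e) => e.elim
  | .func f _ => isEmptyElim f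

theorem interpTerm_mem {S : Set ZFSet.{0}} {v : Fin n → ZFSet.{0}} (hv : ∀ i, v i ∈ S) :
    ∀ t : L.Term (Empty ⊕ Fin n), interpTerm v t ∈ S
  | .var (Sum.inr i) => hv i
  | .var (Sum.inl e) => e.elim
  | .func f _ => isEmptyElim f

theorem bRealize_reindex (φ : L.BoundedFormula Empty m) (σ : Fin m → Fin n)
    (v : Fin n → ZFSet.{0}) : N.BRealize (reindex σ φ) v ↔ N.BRealize φ (v ∘ σ) := by
  induction φ generalizing n with
  | falsum => rfl
  | equal t u => simp only [reindex, BRealize, interpTerm_relabel]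
  | rel R ts => simp only [reindex, BRealize, interpTerm_relabel]
  | imp φ ψ ihφ ihψ => exact imp_congr (ihφ σ v) (ihψ σ v)
  | all φ ih =>
    refine forall₂_congr fun x _ => (ih _ _).trans ?_
    congr! 1
    ext i
    induction i using Fin.lastCases <;> simp

theorem bRealize_inf {φ ψ : L.BoundedFormula Empty n} {v : Fin n → ZFSet.{0}} :
    N.BRealize (φ ⊓ ψ) v ↔ N.BRealize φ v ∧ N.BRealize ψ v :=
  show ¬(N.BRealize φ v → ¬N.BRealize ψ v) ↔ _ by tauto

theorem bRealize_ex {φ : L.BoundedFormula Empty (n + 1)} {v : Fin n → ZFSet.{0}} :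
    N.BRealize φ.ex v ↔ ∃ x ∈ N.carrier, N.BRealize φ (Fin.snoc v x) :=
  show ¬(∀ x ∈ N.carrier, ¬_) ↔ _ by simp only [not_forall, not_not, exists_prop]

def existsUnique (φ : L.BoundedFormula Empty (n + 1)) : L.BoundedFormula Empty n :=
  (φ ⊓ (reindex (Fin.last n).castSucc.succAbove φ |>.imp
    (.equal (.var (.inr (Fin.last _))) (.var (.inr (Fin.last n).castSucc)))).all).ex

theorem bRealize_existsUnique {φ : L.BoundedFormula Empty (n + 1)} {v : Fin n → ZFSet.{0}} :
    N.BRealize (existsUnique φ) v ↔ ∃ x ∈ N.carrier, N.BRealize φ (Fin.snoc v x) ∧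
      ∀ y ∈ N.carrier, N.BRealize φ (Fin.snoc v y) → y = x := by
  rw [existsUnique, bRealize_ex]
  refine exists_congr fun x => and_congr_right fun _ => ?_
  rw [bRealize_inf]
  refine and_congr_right' (forall₂_congr fun y _ => ?_)
  show N.BRealize (reindex _ φ) _ → _ ↔ _
  rw [bRealize_reindex, snoc_comp_succAbove, Fin.init_snoc]
  show _ → interpTerm _ (.var (.inr _)) = interpTerm _ (.var (.inr _)) ↔ _
  simp only [interpTerm, Fin.snoc_last, Fin.snoc_castSucc]

def Definable (N : VModel L) {n : ℕ} (P : (Fin n → ZFSet.{0}) → Prop) : Prop :=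
  ∃ φ : L.BoundedFormula Empty n, ∀ v, (∀ i, v i ∈ N.carrier) → (N.BRealize φ v ↔ P v)

namespace Definable

variable {P Q : (Fin n → ZFSet.{0}) → Prop}

theorem of_iff (hP : N.Definable P) (h : ∀ v, (∀ i, v i ∈ N.carrier) → (P v ↔ Q v)) :
    N.Definable Q :=
  let ⟨φ, hφ⟩ := hP
  ⟨φ, fun v hv => (hφ v hv).trans (h v hv)⟩

theorem comp (hP : N.Definable P) (σ : Fin n → Fin m) : N.Definable fun v => P (v ∘ σ) :=
  let ⟨φ, hφ⟩ := hP
  ⟨reindex σ φ, fun v hv => (bRealize_reindex φ σ v).trans (hφ _ fun i => hv (σ i))⟩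

theorem not (hP : N.Definable P) : N.Definable fun v => ¬P v :=
  let ⟨φ, hφ⟩ := hP
  ⟨φ.not, fun v hv => not_congr (hφ v hv)⟩

theorem imp (hP : N.Definable P) (hQ : N.Definable Q) : N.Definable fun v => P v → Q v :=
  let ⟨φ, hφ⟩ := hP
  let ⟨ψ, hψ⟩ := hQ
  ⟨φ.imp ψ, fun v hv => imp_congr (hφ v hv) (hψ v hv)⟩

theorem and (hP : N.Definable P) (hQ : N.Definable Q) : N.Definable fun v => P v ∧ Q v :=
  (hP.imp hQ.not).not.of_iff fun _ _ => by tauto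

theorem or (hP : N.Definable P) (hQ : N.Definable Q) : N.Definable fun v => P v ∨ Q v :=
  (hP.not.imp hQ).of_iff fun _ _ => by tauto

theorem iff (hP : N.Definable P) (hQ : N.Definable Q) : N.Definable fun v => P v ↔ Q v :=
  ((hP.imp hQ).and (hQ.imp hP)).of_iff fun _ _ => iff_iff_implies_and_implies.symm

theorem all {P : (Fin (n + 1) → ZFSet.{0}) → Prop} (hP : N.Definable P) :
    N.Definable fun v => ∀ x ∈ N.carrier, P (Fin.snoc v x) :=
  let ⟨φ, hφ⟩ := hP
  ⟨φ.all, fun _ hv => forall₂_congr fun _ hx => hφ _ (snoc_mem hv hx)⟩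

theorem ex {P : (Fin (n + 1) → ZFSet.{0}) → Prop} (hP : N.Definable P) :
    N.Definable fun v => ∃ x ∈ N.carrier, P (Fin.snoc v x) :=
  hP.not.all.not.of_iff fun _ _ => by simp only [not_forall, not_not, exists_prop]

end Definable

theorem definable_bRealize (φ : L.BoundedFormula Empty n) : N.Definable (N.BRealize φ) :=
  ⟨φ, fun _ _ => Iff.rfl⟩

theorem definable_eq (i j : Fin n) : N.Definable fun v => v i = v j :=
  ⟨.equal (.var (.inr i)) (.var (.inr j)), fun _ _ => Iff.rfl⟩

theorem definable_mem {memRel : L.Relations 2} (hN : MemCorrect memRel N) (i j : Fin n) :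
    N.Definable fun v => v i ∈ v j := by
  refine ⟨.rel memRel ![.var (.inr i), .var (.inr j)], fun v hv => ?_⟩
  refine Iff.trans ?_ (hN _ _ (hv i) (hv j))
  show N.rel memRel _ ↔ _
  convert Iff.rfl using 2
  ext k
  fin_cases k <;> rfl

end VModel

section Transfer

variable {M N : VModel L} {n : ℕ}

theorem ElemSub.exists_of_definable (hMN : ElemSub M N) {P : (Fin (n + 1) → ZFSet.{0}) → Prop}
    (hP : N.Definable P) {v : Fin n → ZFSet.{0}} (hv : ∀ i, v i ∈ M.carrier)
    (h : ∃ x ∈ N.carrier, P (Fin.snoc v x)) : ∃ x ∈ M.carrier, P (Fin.snoc v x) := by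
  obtain ⟨φ, hφ⟩ := hP
  have hN : N.BRealize φ.ex v := VModel.bRealize_ex.2 <| by
    obtain ⟨x, hx, hPx⟩ := h
    exact ⟨x, hx, (hφ _ (snoc_mem (fun i => hMN.1 (hv i)) hx)).2 hPx⟩
  obtain ⟨x, hx, hφx⟩ := VModel.bRealize_ex.1 ((hMN.2.2 _ v hv).2 hN)
  have hvx := snoc_mem hv hx
  exact ⟨x, hx, (hφ _ fun i => hMN.1 (hvx i)).1 ((hMN.2.2 _ _ hvx).1 hφx)⟩

/-- The formula defining `x` in `A`, together with its uniqueness, transfers from `A` to `M`,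
up to `N` and down to `N'`. -/
theorem mem_of_definable_unique {A N' : VModel L} (hMA : ElemSub M A) (hMN : ElemSub M N)
    (hN' : ElemSub N' N) {P : (Fin (n + 1) → ZFSet.{0}) → Prop} (hP : A.Definable P)
    {v : Fin n → ZFSet.{0}} (hvM : ∀ i, v i ∈ M.carrier) (hvN' : ∀ i, v i ∈ N'.carrier)
    {x : ZFSet.{0}} (hx : x ∈ A.carrier) (hPx : P (Fin.snoc v x))
    (huniq : ∀ y ∈ A.carrier, P (Fin.snoc v y) → y = x) :
    x ∈ M.carrier ∧ x ∈ N'.carrier := by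
  obtain ⟨φ, hφ⟩ := hP
  have hvA i := hMA.1 (hvM i)
  have hA : A.BRealize (VModel.existsUnique φ) v :=
    VModel.bRealize_existsUnique.2 ⟨x, hx, (hφ _ (snoc_mem hvA hx)).2 hPx,
      fun y hy hφy => huniq y hy ((hφ _ (snoc_mem hvA hy)).1 hφy)⟩
  have hM := (hMA.2.2 _ v hvM).2 hA
  have hN := (hMN.2.2 _ v hvM).1 hM
  obtain ⟨x₁, hx₁, hφx₁, -⟩ := VModel.bRealize_existsUnique.1 hM
  obtain ⟨x₀, -, -, hNuniq⟩ := VModel.bRealize_existsUnique.1 hN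
  obtain ⟨x₂, hx₂, hφx₂, -⟩ := VModel.bRealize_existsUnique.1 ((hN'.2.2 _ v hvN').2 hN)
  have hvx₁ := snoc_mem hvM hx₁
  have hx₁x : x₁ = x :=
    huniq x₁ (hMA.1 hx₁) ((hφ _ fun i => hMA.1 (hvx₁ i)).1 ((hMA.2.2 _ _ hvx₁).1 hφx₁))
  have hx₂x₁ : x₂ = x₁ :=
    (hNuniq x₂ (hN'.1 hx₂) ((hN'.2.2 _ _ (snoc_mem hvN' hx₂)).1 hφx₂)).trans
      (hNuniq x₁ (hMN.1 hx₁) ((hMN.2.2 _ _ hvx₁).1 hφx₁)).symm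
  exact ⟨hx₁x ▸ hx₁, hx₁x ▸ hx₂x₁ ▸ hx₂⟩

theorem elemSub_restrictTo_of_witness (S : Set ZFSet.{0})
    (hS : ∀ (n : ℕ) (φ : L.BoundedFormula Empty (n + 1)) (v : Fin n → ZFSet.{0}),
      (∀ i, v i ∈ S ∩ N.carrier) → ∀ x ∈ N.carrier, N.BRealize φ (Fin.snoc v x) →
        ∃ y ∈ S ∩ N.carrier, N.BRealize φ (Fin.snoc v y)) :
    ElemSub (restrictTo N S) N := by
  refine ⟨Set.inter_subset_right, fun _ _ v hv => ⟨And.left, fun h => ⟨h, hv⟩⟩, ?_⟩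
  intro n φ
  induction φ with
  | falsum => exact fun _ _ => Iff.rfl
  | equal => exact fun _ _ => Iff.rfl
  | rel R ts =>
    exact fun v hv => ⟨And.left, fun h => ⟨h, fun i => VModel.interpTerm_mem hv (ts i)⟩⟩
  | imp φ ψ ihφ ihψ => exact fun v hv => imp_congr (ihφ v hv) (ihψ v hv)
  | all φ ih =>
    intro v hv
    refine ⟨fun h x hx => ?_, fun h x hx => (ih _ (snoc_mem hv hx)).2 (h x hx.2)⟩
    by_contra hφx
    obtain ⟨y, hy, hφy⟩ := hS _ φ.not v hv x hx hφx
    exact hφy ((ih _ (snoc_mem hv hy)).1 (h y hy))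

end Transfer

section RankGraph

open ZFSet

theorem mem_toZFSet_rank {x t : ZFSet.{0}} :
    t ∈ x.rank.toZFSet ↔ ∃ y ∈ x, t = y.rank.toZFSet ∨ t ∈ y.rank.toZFSet := by
  constructor
  · intro ht
    obtain ⟨a, ha, rfl⟩ := Ordinal.mem_toZFSet_iff.1 ht
    obtain ⟨y, hy, hay⟩ := lt_rank_iff.1 ha
    exact ⟨y, hy, hay.eq_or_lt.imp (congrArg _) Ordinal.toZFSet_mem_toZFSet_iff.2⟩
  · rintro ⟨y, hy, rfl | ht⟩
    · exact Ordinal.toZFSet_mem_toZFSet_iff.2 (rank_lt_of_mem hy)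
    · exact Ordinal.toZFSet_subset_toZFSet_iff.2 (rank_lt_of_mem hy).le ht

theorem exists_isLeast_toZFSet_rank {X : Set ZFSet.{0}} (hX : X.Nonempty) :
    ∃ x ∈ X, IsLeast ((fun y => y.rank.toZFSet) '' X) x.rank.toZFSet :=
  ⟨_, Function.argminOn_mem rank X hX, Set.mem_image_of_mem _ (Function.argminOn_mem rank X hX),
    by rintro _ ⟨y, hy, rfl⟩; exact Ordinal.toZFSet_monotone (Function.argminOn_le rank X hy)⟩

theorem mem_of_kpair_mem {S : Set ZFSet.{0}} (hS : TransClass S) {u w : ZFSet.{0}}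
    (h : u.pair w ∈ S) : u ∈ S ∧ w ∈ S := by
  have hu : ({u} : ZFSet.{0}) ∈ S := hS h (by simp [ZFSet.pair])
  have huw : ({u, w} : ZFSet.{0}) ∈ S := hS h (by simp [ZFSet.pair])
  exact ⟨hS hu (mem_singleton.2 rfl), hS huw (by simp)⟩

/-- The graph of `y ↦ rank y` on the transitive closure of `{x}`. -/
noncomputable def rankGraph : ZFSet.{0} → ZFSet.{0} :=
  mem_wf.fix fun x ih => insert (x.pair x.rank.toZFSet) (ZFSet.iUnion fun y : x => ih y y.2)

theorem mem_rankGraph {x p : ZFSet.{0}} :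
    p ∈ rankGraph x ↔ p = x.pair x.rank.toZFSet ∨ ∃ y ∈ x, p ∈ rankGraph y := by
  rw [rankGraph, WellFounded.fix_eq, mem_insert_iff, mem_iUnion]
  simp only [Subtype.exists, exists_prop]

theorem kpair_rank_mem_rankGraph (x : ZFSet.{0}) : x.pair x.rank.toZFSet ∈ rankGraph x :=
  mem_rankGraph.2 (.inl rfl)

theorem rankGraph_subset_of_mem {x y : ZFSet.{0}} (hy : y ∈ x) : rankGraph y ⊆ rankGraph x :=
  fun _ hp => mem_rankGraph.2 (.inr ⟨y, hy, hp⟩)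

theorem eq_of_kpair_mem_rankGraph {x u w : ZFSet.{0}} (h : u.pair w ∈ rankGraph x) :
    w = u.rank.toZFSet ∧ rankGraph u ⊆ rankGraph x := by
  induction x using inductionOn generalizing u w with
  | h x ih =>
    rcases mem_rankGraph.1 h with h | ⟨y, hy, h⟩
    · obtain ⟨rfl, rfl⟩ := pair_inj.1 h
      exact ⟨rfl, subset_rfl⟩
    · obtain ⟨hw, hsub⟩ := ih y hy h
      exact ⟨hw, hsub.trans (rankGraph_subset_of_mem hy)⟩

/-- A set-sized witness to the recursion `rank u = ⋃_{z ∈ u} succ (rank z)` on an `∈`-closed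
domain: unlike `rank` itself, this is expressible inside a transitive structure. -/
def IsRankFn (f : ZFSet.{0}) : Prop :=
  ∀ u w : ZFSet.{0}, u.pair w ∈ f → (∀ z ∈ u, ∃ w', z.pair w' ∈ f) ∧
    ∀ t, t ∈ w ↔ ∃ z ∈ u, ∃ w', z.pair w' ∈ f ∧ (t = w' ∨ t ∈ w')

theorem isRankFn_iff_of_transClass {S : Set ZFSet.{0}} (hS : TransClass S) {f : ZFSet.{0}}
    (hf : f ∈ S) : IsRankFn f ↔ ∀ u ∈ S, ∀ w ∈ S, u.pair w ∈ f →
      (∀ z ∈ u, ∃ w', z.pair w' ∈ f) ∧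
        ∀ t ∈ S, (t ∈ w ↔ ∃ z ∈ u, ∃ w' ∈ S, z.pair w' ∈ f ∧ (t = w' ∨ t ∈ w')) := by
  have hval {z w' : ZFSet.{0}} (h : z.pair w' ∈ f) : w' ∈ S := (mem_of_kpair_mem hS (hS hf h)).2
  constructor
  · intro h u _ w _ huw
    obtain ⟨hdom, hrec⟩ := h u w huw
    refine ⟨hdom, fun t _ => (hrec t).trans (exists_congr fun z => and_congr_right fun _ => ?_)⟩
    exact ⟨fun ⟨w', h⟩ => ⟨w', hval h.1, h⟩, fun ⟨w', _, h⟩ => ⟨w', h⟩⟩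
  · intro h u w huw
    obtain ⟨hu, hw⟩ := mem_of_kpair_mem hS (hS hf huw)
    obtain ⟨hdom, hrec⟩ := h u hu w hw huw
    refine ⟨hdom, fun t => ⟨fun ht => ?_, fun ⟨z, hz, w', hzw, ht⟩ => ?_⟩⟩
    · obtain ⟨z, hz, w', -, h⟩ := (hrec t (hS hw ht)).1 ht
      exact ⟨z, hz, w', h⟩
    · have htS : t ∈ S := ht.elim (· ▸ hval hzw) fun h => hS (hval hzw) h
      exact (hrec t htS).2 ⟨z, hz, w', hval hzw, hzw, ht⟩

theorem isRankFn_rankGraph (x : ZFSet.{0}) : IsRankFn (rankGraph x) := by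
  intro u w h
  obtain ⟨rfl, hsub⟩ := eq_of_kpair_mem_rankGraph h
  have hz : ∀ z ∈ u, z.pair z.rank.toZFSet ∈ rankGraph x := fun z hz =>
    hsub (rankGraph_subset_of_mem hz (kpair_rank_mem_rankGraph z))
  refine ⟨fun z hz' => ⟨_, hz z hz'⟩, fun t => mem_toZFSet_rank.trans ?_⟩
  refine exists_congr fun z => and_congr_right fun hz' => ⟨fun ht => ⟨_, hz z hz', ht⟩, ?_⟩
  rintro ⟨w', hw', ht⟩
  rwa [(eq_of_kpair_mem_rankGraph hw').1] at ht

theorem IsRankFn.eq_rank {f : ZFSet.{0}} (hf : IsRankFn f) {u w : ZFSet.{0}}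
    (h : u.pair w ∈ f) : w = u.rank.toZFSet := by
  induction u using inductionOn generalizing w with
  | h u ih =>
    ext t
    rw [(hf u w h).2, mem_toZFSet_rank]
    refine exists_congr fun z => and_congr_right fun hz => ⟨?_, fun ht => ?_⟩
    · rintro ⟨w', hw', ht⟩
      rwa [ih z hz hw'] at ht
    · obtain ⟨w', hw'⟩ := (hf u w h).1 z hz
      exact ⟨w', hw', by rwa [ih z hz hw']⟩

theorem IsRankFn.rankGraph_subset {f : ZFSet.{0}} (hf : IsRankFn f) {u w : ZFSet.{0}}
    (h : u.pair w ∈ f) : rankGraph u ⊆ f := by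
  induction u using inductionOn generalizing w with
  | h u ih =>
    intro p hp
    rcases mem_rankGraph.1 hp with rfl | ⟨z, hz, hp⟩
    · rwa [← hf.eq_rank h]
    · obtain ⟨w', hw'⟩ := (hf u w h).1 z hz
      exact ih z hz hw' hp

/-- Describes `rankGraph y` inside `S` (see `isLeastRankFnIn_iff`) without transitive closures,
so that `A` can define it. -/
def IsLeastRankFnIn (S : Set ZFSet.{0}) (y g : ZFSet.{0}) : Prop :=
  IsRankFn g ∧ (∃ w, y.pair w ∈ g) ∧ ∀ f ∈ S, IsRankFn f → (∃ w, y.pair w ∈ f) → g ⊆ f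

theorem isLeastRankFnIn_iff {S : Set ZFSet.{0}} {y g : ZFSet.{0}} (hy : rankGraph y ∈ S) :
    IsLeastRankFnIn S y g ↔ g = rankGraph y := by
  refine ⟨fun ⟨hg, ⟨w, hw⟩, hmin⟩ => ?_, ?_⟩
  · exact le_antisymm (hmin _ hy (isRankFn_rankGraph y) ⟨_, kpair_rank_mem_rankGraph y⟩)
      (hg.rankGraph_subset hw)
  · rintro rfl
    exact ⟨isRankFn_rankGraph y, ⟨_, kpair_rank_mem_rankGraph y⟩,
      fun f _ hf ⟨_, hw⟩ => hf.rankGraph_subset hw⟩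

end RankGraph

section TransitiveDefinable

open ZFSet VModel

variable {A : VModel L} {memRel : L.Relations 2} {n : ℕ}

theorem VModel.Definable.bAll (hT : TransClass A.carrier) (hMC : MemCorrect memRel A)
    {P : (Fin (n + 1) → ZFSet.{0}) → Prop} (hP : A.Definable P) (j : Fin n) :
    A.Definable fun v => ∀ x ∈ v j, P (Fin.snoc v x) :=
  ((definable_mem hMC (Fin.last n) j.castSucc).imp hP).all.of_iff fun v hv => by
    simp only [Fin.snoc_last, Fin.snoc_castSucc]
    exact ⟨fun h x hx => h x (hT (hv j) hx) hx, fun h x _ hx => h x hx⟩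

theorem VModel.Definable.bEx (hT : TransClass A.carrier) (hMC : MemCorrect memRel A)
    {P : (Fin (n + 1) → ZFSet.{0}) → Prop} (hP : A.Definable P) (j : Fin n) :
    A.Definable fun v => ∃ x ∈ v j, P (Fin.snoc v x) :=
  ((definable_mem hMC (Fin.last n) j.castSucc).and hP).ex.of_iff fun v hv => by
    simp only [Fin.snoc_last, Fin.snoc_castSucc]
    exact ⟨fun ⟨x, _, hx, h⟩ => ⟨x, hx, h⟩, fun ⟨x, hx, h⟩ => ⟨x, hT (hv j) hx, hx, h⟩⟩

theorem definable_subset (hT : TransClass A.carrier) (hMC : MemCorrect memRel A) (i j : Fin n) :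
    A.Definable fun v => v i ⊆ v j :=
  ((definable_mem hMC (Fin.last n) j.castSucc).bAll hT hMC i).of_iff fun v _ => by
    simp only [Fin.snoc_last, Fin.snoc_castSucc]
    rfl

theorem definable_eq_of_mem_iff (hT : TransClass A.carrier) (hMC : MemCorrect memRel A)
    {F : (Fin n → ZFSet.{0}) → ZFSet.{0}} {Q : (Fin (n + 1) → ZFSet.{0}) → Prop}
    (hQ : A.Definable Q)
    (hF : ∀ v, (∀ i, v i ∈ A.carrier) → ∀ t, t ∈ F v ↔ t ∈ A.carrier ∧ Q (Fin.snoc v t))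
    (k : Fin n) : A.Definable fun v => v k = F v :=
  ((definable_mem hMC (Fin.last n) k.castSucc).iff hQ).all.of_iff fun v hv => by
    simp only [Fin.snoc_last, Fin.snoc_castSucc]
    refine ⟨fun h => ext fun t => ?_, fun h t ht => by rw [h, hF v hv]; exact and_iff_right ht⟩
    rw [hF v hv]
    exact ⟨fun ht => ⟨hT (hv k) ht, (h t (hT (hv k) ht)).1 ht⟩, fun ⟨ht, hQt⟩ => (h t ht).2 hQt⟩

theorem definable_eq_pair (hT : TransClass A.carrier) (hMC : MemCorrect memRel A)
    (i j k : Fin n) : A.Definable fun v => v k = {v i, v j} :=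
  definable_eq_of_mem_iff hT hMC
    ((definable_eq (Fin.last n) i.castSucc).or (definable_eq (Fin.last n) j.castSucc))
    (fun v hv t => by
      simp only [Fin.snoc_last, Fin.snoc_castSucc, mem_pair]
      constructor
      · rintro (rfl | rfl) <;> simp [hv]
      · exact And.right) k

theorem definable_eq_insert (hT : TransClass A.carrier) (hMC : MemCorrect memRel A)
    (i k : Fin n) : A.Definable fun v => v k = insert (v i) (v i) :=
  definable_eq_of_mem_iff hT hMC
    ((definable_eq (Fin.last n) i.castSucc).or (definable_mem hMC (Fin.last n) i.castSucc))
    (fun v hv t => by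
      simp only [Fin.snoc_last, Fin.snoc_castSucc, mem_insert_iff]
      constructor
      · rintro (rfl | ht)
        · simp [hv]
        · exact ⟨hT (hv i) ht, .inr ht⟩
      · exact And.right) k

theorem definable_eq_kpair (hT : TransClass A.carrier) (hMC : MemCorrect memRel A)
    (hpair : ∀ x ∈ A.carrier, ∀ y ∈ A.carrier, ({x, y} : ZFSet.{0}) ∈ A.carrier)
    (i j k : Fin n) : A.Definable fun v => v k = (v i).pair (v j) :=
  definable_eq_of_mem_iff hT hMC
    ((definable_eq_pair hT hMC i.castSucc i.castSucc (Fin.last n)).or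
      (definable_eq_pair hT hMC i.castSucc j.castSucc (Fin.last n)))
    (fun v hv t => by
      simp only [Fin.snoc_last, Fin.snoc_castSucc, ZFSet.pair, mem_pair, pair_eq_singleton]
      constructor
      · rintro (rfl | rfl)
        · exact ⟨pair_eq_singleton (v i) ▸ hpair _ (hv i) _ (hv i), .inl rfl⟩
        · exact ⟨hpair _ (hv i) _ (hv j), .inr rfl⟩
      · exact And.right) k

theorem definable_kpair_mem (hT : TransClass A.carrier) (hMC : MemCorrect memRel A)
    (hpair : ∀ x ∈ A.carrier, ∀ y ∈ A.carrier, ({x, y} : ZFSet.{0}) ∈ A.carrier)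
    (i j k : Fin n) : A.Definable fun v => (v i).pair (v j) ∈ v k :=
  ((definable_eq_kpair hT hMC hpair i.castSucc j.castSucc (Fin.last n)).bEx hT hMC k).of_iff
    fun v _ => by simp only [Fin.snoc_last, Fin.snoc_castSucc, exists_eq_right]

theorem definable_mem_dom (hT : TransClass A.carrier) (hMC : MemCorrect memRel A)
    (hpair : ∀ x ∈ A.carrier, ∀ y ∈ A.carrier, ({x, y} : ZFSet.{0}) ∈ A.carrier)
    (i k : Fin n) : A.Definable fun v => ∃ w, (v i).pair w ∈ v k :=
  (definable_kpair_mem hT hMC hpair i.castSucc (Fin.last n) k.castSucc).ex.of_iff fun v hv => by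
    simp only [Fin.snoc_last, Fin.snoc_castSucc]
    exact ⟨fun ⟨w, _, h⟩ => ⟨w, h⟩, fun ⟨w, h⟩ => ⟨w, (mem_of_kpair_mem hT (hT (hv k) h)).2, h⟩⟩

theorem definable_isRankFn (hT : TransClass A.carrier) (hMC : MemCorrect memRel A)
    (hpair : ∀ x ∈ A.carrier, ∀ y ∈ A.carrier, ({x, y} : ZFSet.{0}) ∈ A.carrier) :
    A.Definable fun v : Fin 1 → ZFSet.{0} => IsRankFn (v 0) := by
  -- bound variables: `0 = f`, `1 = u`, `2 = w`, then `z` resp. `t, z, w'` from index `3`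
  have hdom := (definable_mem_dom hT hMC hpair (3 : Fin 4) 0).bAll hT hMC 1
  have hval := ((definable_mem hMC (3 : Fin 4) 2).iff
    (((definable_kpair_mem hT hMC hpair (4 : Fin 6) 5 0).and
      ((definable_eq 3 5).or (definable_mem hMC 3 5))).ex.bEx hT hMC 1)).all
  refine ((definable_kpair_mem hT hMC hpair (1 : Fin 3) 2 0).imp (hdom.and hval)).all.all.of_iff
    fun v hv => ?_
  simpa [Fin.snoc] using (isRankFn_iff_of_transClass hT (hv 0)).symm

end TransitiveDefinable

namespace Admissible

open ZFSet VModel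

variable {A : VModel L} {memRel : L.Relations 2}

theorem transClass (hA : Admissible memRel A) : TransClass A.carrier :=
  hA.1

theorem memCorrect (hA : Admissible memRel A) : MemCorrect memRel A :=
  hA.2.2.1

theorem pair_mem (hA : Admissible memRel A) :
    ∀ x ∈ A.carrier, ∀ y ∈ A.carrier, ({x, y} : ZFSet.{0}) ∈ A.carrier :=
  hA.2.2.2.2.1

theorem sUnion_mem (hA : Admissible memRel A) {x : ZFSet.{0}} (hx : x ∈ A.carrier) :
    ⋃₀ x ∈ A.carrier :=
  hA.2.2.2.2.2.1 x hx

theorem insert_mem (hA : Admissible memRel A) {x y : ZFSet.{0}} (hx : x ∈ A.carrier)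
    (hy : y ∈ A.carrier) : insert x y ∈ A.carrier := by
  have hxy : ⋃₀ ({y, {x}} : ZFSet.{0}) = insert x y := by ext; simp [or_comm]
  exact hxy ▸ hA.sUnion_mem (hA.pair_mem _ hy _ (pair_eq_singleton x ▸ hA.pair_mem _ hx _ hx))

theorem kpair_mem (hA : Admissible memRel A) {x y : ZFSet.{0}} (hx : x ∈ A.carrier)
    (hy : y ∈ A.carrier) : x.pair y ∈ A.carrier :=
  hA.pair_mem _ (pair_eq_singleton x ▸ hA.pair_mem _ hx _ hx) _ (hA.pair_mem _ hx _ hy)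

/-- The replacement scheme of `A`, for a relation that `A` defines. -/
theorem exists_image (hA : Admissible memRel A) {R : (Fin 2 → ZFSet.{0}) → Prop}
    (hR : A.Definable R) {F : ZFSet.{0} → ZFSet.{0}} {x : ZFSet.{0}} (hx : x ∈ A.carrier)
    (hF : ∀ y ∈ x, F y ∈ A.carrier ∧ ∀ z ∈ A.carrier, R ![y, z] ↔ z = F y) :
    ∃ b ∈ A.carrier, ∀ z, z ∈ b ↔ ∃ y ∈ x, z = F y := by
  obtain ⟨φ, hφ⟩ := hR
  have hφF : ∀ y ∈ x, ∀ z ∈ A.carrier,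
      A.BRealize φ (Fin.snoc (Fin.snoc Fin.elim0 y) z) ↔ z = F y := fun y hy z hz =>
    have hyz : (Fin.snoc (Fin.snoc Fin.elim0 y) z : Fin 2 → ZFSet.{0}) = ![y, z] := by
      ext i; fin_cases i <;> rfl
    (hφ _ (snoc_mem (snoc_mem finZeroElim (hA.transClass hx hy)) hz)).trans (hyz ▸ (hF y hy).2 z hz)
  obtain ⟨b, hb, hbF⟩ := hA.2.2.2.2.2.2.2.2.2.1 0 φ Fin.elim0 finZeroElim x hx fun y hy =>
    ⟨F y, ⟨(hF y hy).1, (hφF y hy _ (hF y hy).1).2 rfl⟩,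
      fun z ⟨hz, hφz⟩ => (hφF y hy z hz).1 hφz⟩
  refine ⟨b, hb, fun z => (hbF z).trans ⟨fun ⟨y, hy, hφz⟩ => ⟨y, hy, ?_⟩, ?_⟩⟩
  · exact (hφF y hy z (hA.transClass hb ((hbF z).2 ⟨y, hy, hφz⟩))).1 hφz
  · rintro ⟨y, hy, rfl⟩
    exact ⟨y, hy, (hφF y hy _ (hF y hy).1).2 rfl⟩

theorem definable_exists_rankFn (hA : Admissible memRel A) :
    A.Definable fun v : Fin 2 → ZFSet.{0} =>
      ∃ f ∈ A.carrier, IsRankFn f ∧ (v 0).pair (v 1) ∈ f :=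
  (((definable_isRankFn hA.transClass hA.memCorrect hA.pair_mem).comp ![2]).and
    (definable_kpair_mem hA.transClass hA.memCorrect hA.pair_mem 0 1 2)).ex.of_iff fun v _ => by
      simp [Fin.snoc]

theorem definable_isLeastRankFnIn (hA : Admissible memRel A) :
    A.Definable fun v : Fin 2 → ZFSet.{0} => IsLeastRankFnIn A.carrier (v 0) (v 1) :=
  have hR := definable_isRankFn hA.transClass hA.memCorrect hA.pair_mem
  (((hR.comp ![1]).and ((definable_mem_dom hA.transClass hA.memCorrect hA.pair_mem 0 1).and
    ((hR.comp ![2]).imp ((definable_mem_dom hA.transClass hA.memCorrect hA.pair_mem 0 2).imp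
      (definable_subset hA.transClass hA.memCorrect 1 2))).all))).of_iff
    fun v _ => by simp [Fin.snoc, IsLeastRankFnIn]

theorem rankGraph_mem (hA : Admissible memRel A) {x : ZFSet.{0}} (hx : x ∈ A.carrier) :
    rankGraph x ∈ A.carrier := by
  induction x using inductionOn with
  | h x ih =>
    have ih y (hy : y ∈ x) := ih y hy (hA.transClass hx hy)
    -- `rankGraph x = insert (x, rank x) (⋃_{y ∈ x} rankGraph y)` and
    -- `rank x = ⋃_{y ∈ x} succ (rank y)`, with both families collected by replacement.
    obtain ⟨B, hB, hBmem⟩ := hA.exists_image (definable_isLeastRankFnIn hA) hx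
      fun y hy => ⟨ih y hy, fun g _ => isLeastRankFnIn_iff (ih y hy)⟩
    have hrank y (hy : y ∈ x) : y.rank.toZFSet ∈ A.carrier :=
      (mem_of_kpair_mem hA.transClass (hA.transClass (ih y hy) (kpair_rank_mem_rankGraph y))).2
    have hsucc : A.Definable fun v : Fin 2 → ZFSet.{0} => ∃ γ ∈ A.carrier,
        (∃ f ∈ A.carrier, IsRankFn f ∧ (v 0).pair γ ∈ f) ∧ v 1 = insert γ γ :=
      (((definable_exists_rankFn hA).comp ![0, 2]).and
        (definable_eq_insert hA.transClass hA.memCorrect 2 1)).ex.of_iff fun _ _ => by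
          simp [Fin.snoc]
    have hsuccF y (hy : y ∈ x) s : (∃ γ ∈ A.carrier,
        (∃ f ∈ A.carrier, IsRankFn f ∧ y.pair γ ∈ f) ∧ s = insert γ γ) ↔
          s = insert y.rank.toZFSet y.rank.toZFSet := by
      refine ⟨?_, fun hs => ⟨_, hrank y hy, ⟨_, ih y hy, isRankFn_rankGraph y,
        kpair_rank_mem_rankGraph y⟩, hs⟩⟩
      rintro ⟨γ, -, ⟨f, -, hf, hyγ⟩, rfl⟩
      rw [hf.eq_rank hyγ]
    obtain ⟨C, hC, hCmem⟩ := hA.exists_image hsucc hx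
      fun y hy => ⟨hA.insert_mem (hrank y hy) (hrank y hy), fun s _ => hsuccF y hy s⟩
    have hrankx : x.rank.toZFSet = ⋃₀ C := by
      ext t
      rw [mem_toZFSet_rank, mem_sUnion]
      simp [hCmem]
    have hgraph : rankGraph x = insert (x.pair x.rank.toZFSet) (⋃₀ B) := by
      ext p
      rw [mem_rankGraph, mem_insert_iff, mem_sUnion]
      simp [hBmem]
    rw [hgraph]
    exact hA.insert_mem (hA.kpair_mem hx (hrankx ▸ hA.sUnion_mem hC)) (hA.sUnion_mem hB)

theorem toZFSet_rank_mem (hA : Admissible memRel A) {x : ZFSet.{0}} (hx : x ∈ A.carrier) :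
    x.rank.toZFSet ∈ A.carrier :=
  (mem_of_kpair_mem hA.transClass
    (hA.transClass (hA.rankGraph_mem hx) (kpair_rank_mem_rankGraph x))).2

theorem definable_rank (hA : Admissible memRel A) :
    A.Definable fun v : Fin 2 → ZFSet.{0} => v 1 = (v 0).rank.toZFSet :=
  (definable_exists_rankFn hA).of_iff fun _ hv =>
    ⟨fun ⟨_, _, hf, h⟩ => hf.eq_rank h,
      fun h => ⟨_, hA.rankGraph_mem (hv 0), isRankFn_rankGraph _,
        h ▸ kpair_rank_mem_rankGraph _⟩⟩

variable {n : ℕ}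

theorem definable_rank_witness (hA : Admissible memRel A) {P : (Fin (n + 1) → ZFSet.{0}) → Prop}
    (hP : A.Definable P) :
    A.Definable fun w : Fin (n + 2) → ZFSet.{0} => P (w ∘ (Fin.last n).castSucc.succAbove) ∧
      w (Fin.last n).castSucc = (w (Fin.last _)).rank.toZFSet :=
  ((hP.comp (Fin.last n).castSucc.succAbove).and
    ((definable_rank hA).comp ![Fin.last _, (Fin.last n).castSucc])).of_iff fun _ _ => by simp

theorem definable_isLeast_rank (hA : Admissible memRel A) {P : (Fin (n + 1) → ZFSet.{0}) → Prop}
    (hP : A.Definable P) : A.Definable fun u : Fin (n + 1) → ZFSet.{0} =>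
      IsLeast ((fun x => x.rank.toZFSet) '' {x ∈ A.carrier | P (Fin.snoc (Fin.init u) x)})
        (u (Fin.last n)) := by
  have hW := (definable_rank_witness hA hP).ex
  refine (hW.and ((hW.comp (Fin.last n).castSucc.succAbove).imp
    (definable_subset hA.transClass hA.memCorrect (Fin.last n).castSucc (Fin.last _))).all).of_iff
    fun u _ => ?_
  simp only [snoc_comp_succAbove, Fin.init_snoc, Fin.snoc_last, Fin.snoc_castSucc]
  refine and_congr (by simp [and_assoc, eq_comm]) ⟨fun h γ hγ => ?_, fun h γ _ hγ => h ?_⟩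
  · obtain ⟨x, ⟨hx, hPx⟩, rfl⟩ := hγ
    exact h _ (hA.toZFSet_rank_mem hx) ⟨x, hx, hPx, rfl⟩
  · obtain ⟨x, hx, hPx, rfl⟩ := hγ
    exact ⟨x, ⟨hx, hPx⟩, rfl⟩

end Admissible

section VirtualModel

open ZFSet VModel

variable {M A H : VModel L} {memRel : L.Relations 2}

theorem ElemSub.toZFSet_rank_mem (hA : Admissible memRel A) (hMA : ElemSub M A) {z : ZFSet.{0}}
    (hz : z ∈ M.carrier) : z.rank.toZFSet ∈ M.carrier := by
  obtain ⟨c, hc, hcz⟩ := hMA.exists_of_definable hA.definable_rank (v := ![z]) (by simp [hz])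
    ⟨_, hA.toZFSet_rank_mem (hMA.1 hz), by simp [Fin.snoc]⟩
  have hcz : c = z.rank.toZFSet := by simpa [Fin.snoc] using hcz
  exact hcz ▸ hc

theorem exists_rank_lt_of_elemSub (hA : Admissible memRel A) (hMA : ElemSub M A)
    (hMH : ElemSub M H) {α : Ordinal.{0}} (hα : ElemSub (restrictTo H (Vclass α)) H) {n : ℕ}
    (ψ : L.BoundedFormula Empty (n + 1)) {v : Fin n → ZFSet.{0}} (hvM : ∀ i, v i ∈ M.carrier)
    (hvα : ∀ i, (v i).rank < α) {x : ZFSet.{0}} (hx : x ∈ M.carrier)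
    (hψx : M.BRealize ψ (Fin.snoc v x)) :
    ∃ y ∈ M.carrier, y.rank < α ∧ M.BRealize ψ (Fin.snoc v y) := by
  obtain ⟨x₀, ⟨hx₀, -⟩, hleast⟩ := exists_isLeast_toZFSet_rank
    (X := {y ∈ A.carrier | A.BRealize ψ (Fin.snoc v y)})
    ⟨x, hMA.1 hx, (hMA.2.2 _ _ (snoc_mem hvM hx)).1 hψx⟩
  obtain ⟨hγM, hγα, -⟩ := mem_of_definable_unique hMA hMH hα
    (hA.definable_isLeast_rank (definable_bRealize ψ)) hvM (fun i => ⟨hvα i, hMH.1 (hvM i)⟩)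
    (hA.toZFSet_rank_mem hx₀) (by simpa using hleast)
    fun δ _ hδ => (by simpa using hδ : IsLeast _ δ).unique hleast
  obtain ⟨x₁, ⟨hx₁, hψx₁⟩, hx₁γ⟩ := hleast.1
  obtain ⟨y, hyM, hψy, hyγ⟩ := hMA.exists_of_definable
    (hA.definable_rank_witness (definable_bRealize ψ)) (snoc_mem hvM hγM)
    ⟨x₁, hx₁, by simpa [snoc_comp_succAbove, hψx₁] using hx₁γ.symm⟩
  simp only [snoc_comp_succAbove, Fin.init_snoc, Fin.snoc_last, Fin.snoc_castSucc] at hψy hyγ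
  refine ⟨y, hyM, ?_, (hMA.2.2 _ _ (snoc_mem hvM hyM)).2 hψy⟩
  simpa [Vclass, hyγ] using hγα

end VirtualModel

/-- If `M` is a virtual model, `α ∈ e_{M̂}`, and `β = min (M ∩ [α, ∞))`
exists, then `β ∈ e_M`. -/
theorem statement_6 (L : FirstOrder.Language) [L.IsRelational] (memRel : L.Relations 2)
    (M H : VModel L) (hM : VirtualModel memRel M) (hH : IsHat M H)
    (a : ZFSet.{0}) (ha : a ∈ eSet H)
    (b : ZFSet.{0}) (hbM : b ∈ M.carrier) (hbord : b.IsOrdinal)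
    (hab : ZFSet.rank a ≤ ZFSet.rank b)
    (hmin : ∀ c ∈ M.carrier, c.IsOrdinal → ZFSet.rank a ≤ ZFSet.rank c →
      ZFSet.rank b ≤ ZFSet.rank c) :
    b ∈ eSet M := by
  obtain ⟨A, hA, hMA⟩ := hM
  have hbelow_b : ∀ z ∈ M.carrier, z.rank < b.rank → z.rank < a.rank := fun z hz hzb => by
    by_contra! h
    have := hmin _ (hMA.toZFSet_rank_mem hA hz) (ZFSet.isOrdinal_toZFSet _)
      (by rwa [Ordinal.rank_toZFSet])
    exact (Ordinal.rank_toZFSet _ ▸ this).not_gt hzb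
  refine ⟨hbM, hbord, elemSub_restrictTo_of_witness _ fun n ψ v hv x hx hψx => ?_⟩
  obtain ⟨y, hyM, hya, hψy⟩ := exists_rank_lt_of_elemSub hA hMA hH.2 ha.2.2 ψ
    (fun i => (hv i).2) (fun i => hbelow_b _ (hv i).2 (hv i).1) hx hψx
  exact ⟨y, ⟨hya.trans_le hab, hyM⟩, hψy⟩

end VMF
end

section
/- Suppose θ > ω is regular, U is a stationary subset of [H_θ]^ω, and x ∈ H_θ. Then the set D := {p ∈ Col_U : there exists M ∈ M_p with x ∈ M} is dense in the poset Col_U. -/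
set_option autoImplicit false

namespace NSF

/-- A class of sets is transitive. -/
def TransClass (S : Set ZFSet.{0}) : Prop := ∀ ⦃x⦄, x ∈ S → ∀ ⦃y⦄, y ∈ x → y ∈ S

/-- The transitive closure of a class: the least transitive class containing it. -/
def trclSet (S : Set ZFSet.{0}) : Set ZFSet.{0} :=
  {x | ∀ T : Set ZFSet.{0}, S ⊆ T → TransClass T → x ∈ T}

/-- `H_θ`: the class of sets hereditarily of cardinality `< θ`. -/
def HSet (θ : Cardinal.{0}) : Set ZFSet.{0} :=
  {x | Cardinal.mk ↥(trclSet x.toSet) < Cardinal.lift.{1} θ}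

/-- `f` is (extensionally) a function, as a set of Kuratowski pairs. -/
def IsZFun (f : ZFSet.{0}) : Prop :=
  (∀ p ∈ f.toSet, ∃ a b : ZFSet.{0}, p = a.pair b) ∧
    ∀ a b c : ZFSet.{0}, a.pair b ∈ f → a.pair c ∈ f → b = c

/-- `δ_S`: the least ordinal that is not (the order type of) an ordinal member of `S`. -/
noncomputable def deltaOrd (S : Set ZFSet.{0}) : Ordinal.{0} :=
  sInf {o : Ordinal.{0} | ¬ ∃ x ∈ S, x.IsOrdinal ∧ ZFSet.rank x = o}

/-- `U` is a stationary subset of `[Hθ]^ω`: a collection of countable subsets of `Hθ`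
meeting every club, i.e. for every `F : Hθ^{<ω} → Hθ` some `M ∈ U` is closed under `F`. -/
def StatInCountable (Hθ : Set ZFSet.{0}) (U : Set ZFSet.{0}) : Prop :=
  (∀ m ∈ U, m.toSet ⊆ Hθ ∧ m.toSet.Countable) ∧
  ∀ F : List ZFSet.{0} → ZFSet.{0},
    (∀ l : List ZFSet.{0}, (∀ x ∈ l, x ∈ Hθ) → F l ∈ Hθ) →
    ∃ m ∈ U, ∀ l : List ZFSet.{0}, (∀ x ∈ l, x ∈ m) → F l ∈ m

/-- A condition of the collapsing poset `Col_U` guided by `U`, coded as a (Kuratowski)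
pair `p = (M_p, d_p)`. -/
def IsCond (θ : Cardinal.{0}) (U : Set ZFSet.{0}) (p : ZFSet.{0}) : Prop :=
  ∃ a b : ZFSet.{0}, p = a.pair b ∧
    -- `M_p` is finite and consists of countable subsets of `H_θ`
    a.toSet.Finite ∧
    (∀ m ∈ a.toSet, m.toSet ⊆ HSet θ ∧ m.toSet.Countable) ∧
    -- (i) each `M ∈ M_p` is in `U` or has no superset in `U` with the same `δ`
    (∀ m ∈ a.toSet,
      m ∈ U ∨ ¬ ∃ nn ∈ U, m.toSet ⊆ nn.toSet ∧ deltaOrd nn.toSet = deltaOrd m.toSet) ∧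
    -- (ii) `M_p` is an `∈`-chain
    (∀ m ∈ a.toSet, ∀ m' ∈ a.toSet, m = m' ∨ m ∈ m' ∨ m' ∈ m) ∧
    -- (iii) `d_p : M_p → [H_θ]^{<ω}`
    IsZFun b ∧ (∀ m : ZFSet.{0}, (∃ y : ZFSet.{0}, m.pair y ∈ b) ↔ m ∈ a) ∧
    (∀ m y : ZFSet.{0}, m.pair y ∈ b → y.toSet.Finite ∧ y.toSet ⊆ HSet θ) ∧
    -- (iv) if `M ∈ N` are both in `M_p` then `d_p(M) ⊆ N`
    (∀ m m' y : ZFSet.{0}, m ∈ a → m' ∈ a → m ∈ m' → m.pair y ∈ b → y.toSet ⊆ m'.toSet)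

/-- The order of `Col_U`: `p ≤ q` iff `M_p ⊇ M_q` and `d_p(M) ⊇ d_q(M)` for `M ∈ M_q`. -/
def CondLe (p q : ZFSet.{0}) : Prop :=
  ∃ ap bp aq bq : ZFSet.{0}, p = ap.pair bp ∧ q = aq.pair bq ∧
    aq.toSet ⊆ ap.toSet ∧
    ∀ m yq yp : ZFSet.{0}, m ∈ aq → m.pair yq ∈ bq → m.pair yp ∈ bp → yq.toSet ⊆ yp.toSet

/-- Compatibility in `Col_U`. -/
def Compat (θ : Cardinal.{0}) (U : Set ZFSet.{0}) (p q : ZFSet.{0}) : Prop :=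
  ∃ r : ZFSet.{0}, IsCond θ U r ∧ CondLe r p ∧ CondLe r q

/-!
Given `p = (M_p, d_p)`, the finite set `{x} ∪ M_p ∪ ⋃ ran d_p` lies in `H_θ`: a countable
subset of `H_θ` belongs to `H_θ` because `θ` is regular and uncountable. Stationarity of `U`
yields `M ∈ U` containing this set, and then `M` sits above every member of the `∈`-chain `M_p`,
so `(M_p ∪ {M}, d_p ∪ {(M, ∅)})` is a condition below `p` with `x ∈ M`.
-/

lemma subset_trclSet (S : Set ZFSet.{0}) : S ⊆ trclSet S := fun _ hx _ hST _ => hST hx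

lemma transClass_trclSet (S : Set ZFSet.{0}) : TransClass (trclSet S) :=
  fun _ hx _ hyx T hST hT => hT (hx T hST hT) hyx

lemma trclSet_subset {S T : Set ZFSet.{0}} (hST : S ⊆ T) (hT : TransClass T) :
    trclSet S ⊆ T :=
  fun _ hx => hx T hST hT

lemma trclSet_subset_union_biUnion (m : ZFSet.{0}) :
    trclSet m.toSet ⊆ m.toSet ∪ ⋃ z ∈ m.toSet, trclSet z.toSet := by
  refine trclSet_subset Set.subset_union_left ?_
  rintro y (hy | hy) w hwy
  · exact Or.inr (Set.mem_biUnion hy (subset_trclSet _ hwy))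
  · obtain ⟨z, hz, hyz⟩ := Set.mem_iUnion₂.1 hy
    exact Or.inr (Set.mem_biUnion hz (transClass_trclSet _ hyz hwy))

lemma mem_HSet_of_countable {θ : Cardinal.{0}} (hreg : θ.IsRegular)
    (hθ : Cardinal.aleph0 < θ) {m : ZFSet.{0}} (hmH : m.toSet ⊆ HSet θ)
    (hm : m.toSet.Countable) : m ∈ HSet θ := by
  have hregL := hreg.lift.{1}
  have hmθ : Cardinal.mk m.toSet < Cardinal.lift.{1} θ :=
    hm.le_aleph0.trans_lt (by simpa using hθ)
  refine (Cardinal.mk_le_mk_of_subset (trclSet_subset_union_biUnion m)).trans_lt ?_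
  refine (Cardinal.mk_union_le _ _).trans_lt (Cardinal.add_lt_of_lt hregL.aleph0_le hmθ ?_)
  exact (Cardinal.card_biUnion_lt_iff_forall_of_isRegular hregL hmθ).2 fun _ hz => hmH hz

lemma StatInCountable.exists_superset_of_finite {Hθ U : Set ZFSet.{0}}
    (hU : StatInCountable Hθ U) {S : Set ZFSet.{0}} (hS : S.Finite) (hSH : S ⊆ Hθ)
    (hSne : S.Nonempty) : ∃ M ∈ U, S ⊆ M.toSet := by
  classical
  obtain ⟨d, hd⟩ := hSne
  set L := hS.toFinset.toList
  have hL : ∀ n, L.getD n d ∈ S := fun n => by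
    rcases lt_or_ge n L.length with h | h
    · rw [List.getD_eq_getElem _ _ h]
      exact hS.mem_toFinset.1 (Finset.mem_toList.1 (List.getElem_mem h))
    · rwa [List.getD_eq_default _ _ h]
  -- `F l` is the `(length l)`-th element of `S`; a set closed under `F` contains `F []`,
  -- hence every `F (replicate n (F []))`, i.e. all of `S`.
  obtain ⟨M, hMU, hM⟩ := hU.2 (fun l => L.getD l.length d) fun _ _ => hSH (hL _)
  have h0 : L.getD 0 d ∈ M := hM [] (by simp)
  refine ⟨M, hMU, fun z hz => ?_⟩
  obtain ⟨n, hn, rfl⟩ := List.mem_iff_getElem.1 (by simpa [L] using hz : z ∈ L)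
  have := hM (List.replicate n (L.getD 0 d)) fun y hy => List.eq_of_mem_replicate hy ▸ h0
  rwa [List.length_replicate, List.getD_eq_getElem _ _ hn] at this

universe u

theorem _root_.ZFSet.toSet_insert (x y : ZFSet.{u}) : (insert x y).toSet = insert x y.toSet :=
  ZFSet.coe_insert x y

theorem _root_.ZFSet.toSet_empty : (∅ : ZFSet.{u}).toSet = ∅ :=
  ZFSet.coe_empty

lemma mem_insert_pair_iff {f a v c y : ZFSet.{u}} :
    c.pair y ∈ insert (a.pair v) f ↔ (c = a ∧ y = v) ∨ c.pair y ∈ f := by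
  rw [ZFSet.mem_insert_iff, ZFSet.pair_inj]

lemma IsZFun.insert_pair {f : ZFSet.{0}} (hf : IsZFun f) {a v : ZFSet.{0}}
    (ha : ∀ y, a.pair y ∉ f) : IsZFun (insert (a.pair v) f) := by
  refine ⟨fun q hq => ?_, fun c y y' hy hy' => ?_⟩
  · rcases ZFSet.mem_insert_iff.1 hq with rfl | hq
    · exact ⟨a, v, rfl⟩
    · exact hf.1 q hq
  · rcases mem_insert_pair_iff.1 hy with ⟨rfl, rfl⟩ | hyf
    · rcases mem_insert_pair_iff.1 hy' with ⟨-, rfl⟩ | hyf'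
      · rfl
      · exact absurd hyf' (ha y')
    · rcases mem_insert_pair_iff.1 hy' with ⟨rfl, -⟩ | hyf'
      · exact absurd hyf (ha y)
      · exact hf.2 c y y' hyf hyf'

lemma IsZFun.finite_range {f : ZFSet.{0}} (hf : IsZFun f) {s : Set ZFSet.{0}} (hs : s.Finite)
    (hdom : ∀ a y : ZFSet.{0}, a.pair y ∈ f → a ∈ s) :
    {y : ZFSet.{0} | ∃ a : ZFSet.{0}, a.pair y ∈ f}.Finite := by
  have hfiber : ∀ a : ZFSet.{0}, {y : ZFSet.{0} | a.pair y ∈ f}.Subsingleton :=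
    fun a y hy y' hy' => hf.2 a y y' hy hy'
  refine (hs.biUnion fun a _ => (hfiber a).finite).subset ?_
  exact fun y ⟨a, hy⟩ => Set.mem_biUnion (hdom a y hy) hy

lemma condLe_insert_pair {a b M v : ZFSet.{0}} (hb : IsZFun b) (hMb : ∀ y, M.pair y ∉ b) :
    CondLe ((insert M a).pair (insert (M.pair v) b)) (a.pair b) := by
  refine ⟨_, _, a, b, rfl, rfl, fun m hm => ZFSet.mem_insert_iff.2 (Or.inr hm), ?_⟩
  intro m yq yp _ hq hp
  rcases mem_insert_pair_iff.1 hp with ⟨rfl, -⟩ | hp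
  · exact absurd hq (hMb yq)
  · rw [hb.2 m yq yp hq hp]

section Conditions

variable {θ : Cardinal.{0}} {U : Set ZFSet.{0}} {a b : ZFSet.{0}}

lemma IsCond.isZFun (hp : IsCond θ U (a.pair b)) : IsZFun b := by
  obtain ⟨a', b', hab, -, -, -, -, hfun, -⟩ := hp
  obtain ⟨rfl, rfl⟩ := ZFSet.pair_injective hab
  exact hfun

lemma IsCond.mem_of_pair_mem (hp : IsCond θ U (a.pair b)) {m y : ZFSet.{0}}
    (h : m.pair y ∈ b) : m ∈ a := by
  obtain ⟨a', b', hab, -, -, -, -, -, hdom, -⟩ := hp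
  obtain ⟨rfl, rfl⟩ := ZFSet.pair_injective hab
  exact (hdom m).1 ⟨y, h⟩

lemma IsCond.pair_notMem (hp : IsCond θ U (a.pair b)) {M : ZFSet.{0}} (haM : ∀ m ∈ a, m ∈ M)
    (y : ZFSet.{0}) : M.pair y ∉ b :=
  fun h => ZFSet.mem_irrefl M (haM M (hp.mem_of_pair_mem h))

lemma IsCond.insert_top (hp : IsCond θ U (a.pair b)) {M : ZFSet.{0}} (hMU : M ∈ U)
    (hMH : M.toSet ⊆ HSet θ) (hMc : M.toSet.Countable) (haM : ∀ m ∈ a, m ∈ M)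
    (hbM : ∀ m y : ZFSet.{0}, m.pair y ∈ b → y.toSet ⊆ M.toSet) :
    IsCond θ U ((insert M a).pair (insert (M.pair ∅) b)) := by
  have hMb := hp.pair_notMem haM
  obtain ⟨a', b', hab, hfin, hH, hUor, hchain, hfun, hdom, hval, hiv⟩ := hp
  obtain ⟨rfl, rfl⟩ := ZFSet.pair_injective hab
  refine ⟨_, _, rfl, ?_, ?_, ?_, ?_, hfun.insert_pair hMb, fun m => ?_, fun m y h => ?_, ?_⟩
  · rw [ZFSet.toSet_insert]
    exact hfin.insert M
  · rw [ZFSet.toSet_insert]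
    exact Set.forall_mem_insert.2 ⟨⟨hMH, hMc⟩, hH⟩
  · rw [ZFSet.toSet_insert]
    exact Set.forall_mem_insert.2 ⟨Or.inl hMU, hUor⟩
  · rw [ZFSet.toSet_insert]
    rintro m (rfl | hm) m' (rfl | hm')
    · exact Or.inl rfl
    · exact Or.inr (Or.inr (haM m' hm'))
    · exact Or.inr (Or.inl (haM m hm))
    · exact hchain m hm m' hm'
  · simp [ZFSet.mem_insert_iff, ← hdom m, exists_or]
  · rcases mem_insert_pair_iff.1 h with ⟨rfl, rfl⟩ | h
    · simp [ZFSet.toSet_empty]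
    · exact hval m y h
  · intro m m' y hm hm' hmm' h
    rcases mem_insert_pair_iff.1 h with ⟨rfl, rfl⟩ | hb
    · simp [ZFSet.toSet_empty]
    · rcases ZFSet.mem_insert_iff.1 hm' with rfl | hm'
      · exact hbM m y hb
      · exact hiv m m' y ((hdom m).1 ⟨y, hb⟩) hm' hmm' hb

lemma IsCond.exists_mem_superset (hp : IsCond θ U (a.pair b)) (hreg : θ.IsRegular)
    (hθ : Cardinal.aleph0 < θ) (hU : StatInCountable (HSet θ) U) {x : ZFSet.{0}}
    (hx : x ∈ HSet θ) :
    ∃ M ∈ U, x ∈ M ∧ (∀ m ∈ a, m ∈ M) ∧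
      ∀ m y : ZFSet.{0}, m.pair y ∈ b → y.toSet ⊆ M.toSet := by
  obtain ⟨a', b', hab, hfin, hH, -, -, hfun, hdom, hval, -⟩ := hp
  obtain ⟨rfl, rfl⟩ := ZFSet.pair_injective hab
  set R := {y : ZFSet.{0} | ∃ m : ZFSet.{0}, m.pair y ∈ b}
  have hR : R.Finite := IsZFun.finite_range hfun hfin fun m y hy => (hdom m).1 ⟨y, hy⟩
  set S := insert x (a.toSet ∪ ⋃ y ∈ R, y.toSet)
  have hSfin : S.Finite :=
    (hfin.union (hR.biUnion fun y ⟨m, hy⟩ => (hval m y hy).1)).insert x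
  have hSH : S ⊆ HSet θ := by
    rintro z (rfl | hz | hz)
    · exact hx
    · exact mem_HSet_of_countable hreg hθ (hH z hz).1 (hH z hz).2
    · obtain ⟨y, ⟨m, hy⟩, hzy⟩ := Set.mem_iUnion₂.1 hz
      exact (hval m y hy).2 hzy
  obtain ⟨M, hMU, hSM⟩ := hU.exists_superset_of_finite hSfin hSH ⟨x, Set.mem_insert x _⟩
  refine ⟨M, hMU, hSM (Set.mem_insert x _), fun m hm => hSM (Or.inr (Or.inl hm)), ?_⟩
  exact fun m y hy z hz => hSM (Or.inr (Or.inr (Set.mem_biUnion ⟨m, hy⟩ hz)))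

end Conditions

/-- for `θ > ω` regular, `U` stationary in `[H_θ]^ω` and `x ∈ H_θ`, the set
`D = {p ∈ Col_U : ∃ M ∈ M_p, x ∈ M}` is dense in `Col_U`. -/
theorem statement_16 (θ : Cardinal.{0}) (hreg : θ.IsRegular) (hθ : Cardinal.aleph0 < θ)
    (U : Set ZFSet.{0}) (hU : StatInCountable (HSet θ) U)
    (x : ZFSet.{0}) (hx : x ∈ HSet θ) :
    ∀ p : ZFSet.{0}, IsCond θ U p →
      ∃ p' : ZFSet.{0}, IsCond θ U p' ∧ CondLe p' p ∧
        ∃ a b : ZFSet.{0}, p' = a.pair b ∧ ∃ m ∈ a.toSet, x ∈ m := by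
  rintro p ⟨a, b, rfl, hcond⟩
  have hp : IsCond θ U (a.pair b) := ⟨a, b, rfl, hcond⟩
  obtain ⟨M, hMU, hxM, haM, hbM⟩ := hp.exists_mem_superset hreg hθ hU hx
  obtain ⟨hMH, hMc⟩ := hU.1 M hMU
  refine ⟨_, hp.insert_top hMU hMH hMc haM hbM,
    condLe_insert_pair hp.isZFun (hp.pair_notMem haM), _, _, rfl, M, ZFSet.mem_insert M a, hxM⟩

end NSF
end

section
/- Suppose D is a predense family of stationary subsets of ω₁, θ ≥ ω₂ is regular, and U := {M ≺ H_θ : M is countable and M captures D}. Then U is projectively stationary: for every stationary S ⊆ ω₁ and every function F : H_θ^{<ω} → H_θ, there exists a countable M ≺ H_θ with M ∈ U, M closed under F, and δ_M ∈ S. -/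
set_option autoImplicit false

namespace NSF

/-- The first uncountable ordinal. -/
noncomputable def omega1 : Ordinal.{0} := (Cardinal.aleph 1).ord

/-- `C` is club (closed and unbounded) in `lam`. -/
def IsClubBelow (C : Set Ordinal.{0}) (lam : Ordinal.{0}) : Prop :=
  C ⊆ Set.Iio lam ∧
  (∀ α : Ordinal.{0}, α < lam → α ≠ 0 →
    (∀ β < α, ∃ γ ∈ C, β < γ ∧ γ < α) → α ∈ C) ∧
  ∀ β : Ordinal.{0}, β < lam → ∃ γ ∈ C, β < γ

/-- `S` is a stationary subset of `ω₁` (as a set of ordinals). -/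
def StatBelowOmega1 (S : Set Ordinal.{0}) : Prop :=
  S ⊆ Set.Iio omega1 ∧ ∀ C : Set Ordinal.{0}, IsClubBelow C omega1 → (S ∩ C).Nonempty

/-- A `ZFSet` is a stationary subset of `ω₁`. -/
def zStat (S : ZFSet.{0}) : Prop :=
  (∀ x ∈ S.toSet, x.IsOrdinal ∧ ZFSet.rank x < omega1) ∧
  ∀ C : Set Ordinal.{0}, IsClubBelow C omega1 → ∃ x ∈ S.toSet, ZFSet.rank x ∈ C

/-- `m` captures `D`: there is `S ∈ D ∩ m` with `δ_m ∈ S`. -/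
noncomputable def Captures (D : Set ZFSet.{0}) (m : ZFSet.{0}) : Prop :=
  ∃ s ∈ D, s ∈ m ∧ ∃ x ∈ s.toSet, ZFSet.rank x = deltaOrd m.toSet

/-- The language with a single binary relation `∈`. -/
def Lmem : FirstOrder.Language where
  Functions := fun _ => Empty
  Relations := fun n => match n with
    | 2 => PUnit
    | _ => Empty

instance : Lmem.IsRelational := fun _ => inferInstanceAs (IsEmpty Empty)

/-- An `Lmem`-structure whose universe is a class of `ZFSet`s. -/
structure VModel where
  carrier : Set ZFSet.{0}
  rel : ∀ ⦃n : ℕ⦄, Lmem.Relations n → (Fin n → ZFSet.{0}) → Prop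
  rel_dom : ∀ ⦃n : ℕ⦄ (r : Lmem.Relations n) (v : Fin n → ZFSet.{0}),
    rel r v → ∀ i, v i ∈ carrier

/-- Interpretation of a term of the (relational) language under an assignment. -/
def interpTerm {n : ℕ} (v : Fin n → ZFSet.{0}) : Lmem.Term (Empty ⊕ Fin n) → ZFSet.{0}
  | .var (Sum.inr i) => v i
  | .var (Sum.inl e) => e.elim
  | .func f _ => isEmptyElim f

/-- Tarski satisfaction; quantifiers range over the carrier. -/
def VModel.BRealize (M : VModel) :
    ∀ {n : ℕ}, Lmem.BoundedFormula Empty n → (Fin n → ZFSet.{0}) → Prop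
  | _, .falsum, _ => False
  | _, .equal t u, v => interpTerm v t = interpTerm v u
  | _, .rel R ts, v => M.rel R fun i => interpTerm v (ts i)
  | _, .imp φ ψ, v => M.BRealize φ v → M.BRealize ψ v
  | _, .all φ, v => ∀ x ∈ M.carrier, M.BRealize φ (Fin.snoc v x)

/-- Elementary substructure (with the inherited structure). -/
def ElemSub (M N : VModel) : Prop :=
  M.carrier ⊆ N.carrier ∧
  (∀ ⦃n : ℕ⦄ (r : Lmem.Relations n) (v : Fin n → ZFSet.{0}),
      (∀ i, v i ∈ M.carrier) → (M.rel r v ↔ N.rel r v)) ∧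
  ∀ ⦃n : ℕ⦄ (φ : Lmem.BoundedFormula Empty n) (v : Fin n → ZFSet.{0}),
    (∀ i, v i ∈ M.carrier) → (M.BRealize φ v ↔ N.BRealize φ v)

/-- The structure `(S, ∈)`. -/
def memModel (S : Set ZFSet.{0}) : VModel where
  carrier := S
  rel := fun n _r v => (∀ i, v i ∈ S) ∧
    (match n, v with
      | 2, v => v 0 ∈ v 1
      | _, _ => False)
  rel_dom := by intro n r v h i; exact h.1 i

/-- The restriction (inherited structure) of `A` to the class `S`. -/
def restrictTo (A : VModel) (S : Set ZFSet.{0}) : VModel where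
  carrier := S ∩ A.carrier
  rel := fun _ r v => A.rel r v ∧ ∀ i, v i ∈ S ∩ A.carrier
  rel_dom := by intro n r v h i; exact h.2 i

/-!
Predensity gives `T ∈ D` with `S ∩ T` stationary. For `β < ω₁` let `M_β` be the closure of
`{T} ∪ β` under `F`, under Skolem functions for `(H_θ, ∈)`, and under taking elements of countable
ordinals, and let `g β := δ_{M_β}`; as `M_β` is countable, `g β < ω₁`. The limit closure points
of `g` form a club, and at such a point `δ` the hull `M_δ` is the directed union of the `M_γ`,
`γ < δ`, so `δ_{M_δ} = δ`. Taking `δ ∈ S ∩ T` in this club, `M_δ` contains `T ∋ δ`, is elementary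
by Tarski–Vaught, and has `δ_{M_δ} = δ ∈ S`.
-/

open Order Set
open Ordinal (toZFSet)

section RuleHull

variable {α : Type*} (R : List α → Set α)

def ruleStep (Y : Set α) : Set α := Y ∪ ⋃ l ∈ {l : List α | ∀ x ∈ l, x ∈ Y}, R l

def ruleHull (X : Set α) : Set α := ⋃ n : ℕ, (ruleStep R)^[n] X

def RuleClosed (Y : Set α) : Prop := ∀ l : List α, (∀ x ∈ l, x ∈ Y) → R l ⊆ Y

variable {R}

theorem subset_ruleStep (Y : Set α) : Y ⊆ ruleStep R Y := subset_union_left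

theorem monotone_iterate_ruleStep (X : Set α) : Monotone fun n : ℕ => (ruleStep R)^[n] X :=
  monotone_nat_of_le_succ fun n => by
    rw [Function.iterate_succ_apply']
    exact subset_ruleStep _

theorem subset_ruleHull (X : Set α) : X ⊆ ruleHull R X :=
  subset_iUnion (fun n => (ruleStep R)^[n] X) 0

theorem _root_.Directed.exists_forall_mem_of_list {ι : Type*} [Nonempty ι] {f : ι → Set α}
    (hf : Directed (· ⊆ ·) f) {l : List α} (hl : ∀ x ∈ l, x ∈ ⋃ i, f i) :
    ∃ i, ∀ x ∈ l, x ∈ f i := by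
  classical
  obtain ⟨i, hi⟩ := hf.exists_mem_subset_of_finset_subset_biUnion (s := l.toFinset)
    fun x hx => hl x (List.mem_toFinset.1 hx)
  exact ⟨i, fun x hx => hi (List.mem_toFinset.2 hx)⟩

theorem ruleClosed_ruleHull (X : Set α) : RuleClosed R (ruleHull R X) := by
  intro l hl
  obtain ⟨n, hn⟩ := (monotone_iterate_ruleStep X).directed_le.exists_forall_mem_of_list hl
  refine Subset.trans ?_ (subset_iUnion _ (n + 1))
  rw [Function.iterate_succ_apply']
  exact (subset_biUnion_of_mem (u := R) (show l ∈ {l | ∀ x ∈ l, x ∈ _} from hn)).trans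
    subset_union_right

theorem RuleClosed.ruleHull_subset {X Y : Set α} (hY : RuleClosed R Y) (hXY : X ⊆ Y) :
    ruleHull R X ⊆ Y := by
  refine iUnion_subset fun n => ?_
  induction n with
  | zero => exact hXY
  | succ n ih =>
    rw [Function.iterate_succ_apply']
    exact union_subset ih (iUnion₂_subset fun l hl => hY l fun x hx => ih (hl x hx))

theorem ruleHull_mono : Monotone (ruleHull R) := fun _ X' h =>
  (ruleClosed_ruleHull X').ruleHull_subset (h.trans (subset_ruleHull X'))

theorem ruleHull_iUnion {ι : Type*} [Nonempty ι] {X : ι → Set α} (hX : Directed (· ⊆ ·) X) :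
    ruleHull R (⋃ i, X i) = ⋃ i, ruleHull R (X i) := by
  refine subset_antisymm (RuleClosed.ruleHull_subset (fun l hl => ?_)
    (iUnion_mono fun i => subset_ruleHull _))
    (iUnion_subset fun i => ruleHull_mono (subset_iUnion X i))
  obtain ⟨i, hi⟩ :=
    (hX.mono_comp _ fun _ _ h => ruleHull_mono (R := R) h).exists_forall_mem_of_list hl
  exact (ruleClosed_ruleHull _ l hi).trans (subset_iUnion (fun i => ruleHull R (X i)) i)

theorem _root_.Set.Countable.setOf_forall_mem_list {Y : Set α} (hY : Y.Countable) :
    {l : List α | ∀ x ∈ l, x ∈ Y}.Countable := by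
  have := hY.to_subtype
  exact (countable_range (List.map ((↑) : Y → α))).mono fun l hl => CanLift.prf l hl

theorem ruleHull_countable (hR : ∀ l, (R l).Countable) {X : Set α} (hX : X.Countable) :
    (ruleHull R X).Countable := by
  refine countable_iUnion fun n => ?_
  induction n with
  | zero => exact hX
  | succ n ih =>
    rw [Function.iterate_succ_apply']
    exact ih.union (ih.setOf_forall_mem_list.biUnion fun l _ => hR l)

end RuleHull

theorem omega1_isSuccLimit : IsSuccLimit omega1 :=
  Cardinal.isSuccLimit_ord Cardinal.aleph0_lt_aleph_one.le

theorem aleph0_lt_cof_omega1 : Cardinal.aleph0 < omega1.cof := by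
  rw [omega1, Cardinal.ord_aleph, Cardinal.cof_omega_one]
  exact Cardinal.aleph0_lt_aleph_one

theorem countable_Iio_iff_lt_omega1 {o : Ordinal.{0}} : (Iio o).Countable ↔ o < omega1 := by
  rw [← Cardinal.le_aleph0_iff_set_countable, Cardinal.mk_Iio_ordinal, Cardinal.lift_le_aleph0,
    omega1, Cardinal.lt_ord, Cardinal.lt_aleph_one_iff]

section DeltaOrd

theorem deltaOrd_eq_sInf (Y : Set ZFSet.{0}) :
    deltaOrd Y = sInf {o : Ordinal.{0} | o.toZFSet ∉ Y} := by
  refine congrArg sInf (ext fun o => not_congr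
    ⟨?_, fun h => ⟨_, h, ZFSet.isOrdinal_toZFSet o, Ordinal.rank_toZFSet o⟩⟩)
  rintro ⟨x, hx, hxo, rfl⟩
  rwa [hxo.toZFSet_rank_eq]

theorem deltaOrd_eq_of_mem_of_notMem {Y : Set ZFSet.{0}} {δ : Ordinal.{0}}
    (hlt : ∀ o < δ, o.toZFSet ∈ Y) (hδ : δ.toZFSet ∉ Y) : deltaOrd Y = δ := by
  rw [deltaOrd_eq_sInf]
  exact IsLeast.csInf_eq ⟨hδ, fun o ho => not_lt.1 fun h => ho (hlt o h)⟩

theorem toZFSet_mem_of_lt_deltaOrd {Y : Set ZFSet.{0}} {o : Ordinal.{0}} (h : o < deltaOrd Y) :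
    o.toZFSet ∈ Y := by
  rw [deltaOrd_eq_sInf] at h
  exact not_not.1 (notMem_of_lt_csInf' h)

theorem exists_toZFSet_notMem {Y : Set ZFSet.{0}} (hY : Y.Countable) :
    ∃ o < omega1, o.toZFSet ∉ Y := by
  by_contra! h
  exact lt_irrefl omega1 (countable_Iio_iff_lt_omega1.1
    (MapsTo.countable_of_injOn h Ordinal.toZFSet_injective.injOn hY))

theorem deltaOrd_lt_omega1 {Y : Set ZFSet.{0}} (hY : Y.Countable) : deltaOrd Y < omega1 := by
  obtain ⟨o, ho, hoY⟩ := exists_toZFSet_notMem hY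
  rw [deltaOrd_eq_sInf]
  exact (csInf_le' hoY).trans_lt ho

def OrdinalsDownClosed (Y : Set ZFSet.{0}) : Prop :=
  ∀ ⦃o o' : Ordinal.{0}⦄, o' < o → o < omega1 → o.toZFSet ∈ Y → o'.toZFSet ∈ Y

theorem lt_deltaOrd_of_toZFSet_mem {Y : Set ZFSet.{0}} (hY : Y.Countable)
    (hcl : OrdinalsDownClosed Y) {o : Ordinal.{0}} (ho : o < omega1) (h : o.toZFSet ∈ Y) :
    o < deltaOrd Y := by
  obtain ⟨o₀, -, ho₀⟩ := exists_toZFSet_notMem hY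
  have hδ : (deltaOrd Y).toZFSet ∉ Y := by
    rw [deltaOrd_eq_sInf]
    exact csInf_mem (s := {o : Ordinal.{0} | o.toZFSet ∉ Y}) ⟨o₀, ho₀⟩
  refine lt_of_not_ge fun hle => hδ ?_
  rcases hle.lt_or_eq with hlt | rfl
  · exact hcl hlt ho h
  · exact h

theorem deltaOrd_mono {Y Y' : Set ZFSet.{0}} (hY : Y.Countable) (hY' : Y'.Countable)
    (hcl' : OrdinalsDownClosed Y') (h : Y ⊆ Y') : deltaOrd Y ≤ deltaOrd Y' :=
  le_of_forall_lt fun _ ho => lt_deltaOrd_of_toZFSet_mem hY' hcl'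
    (ho.trans (deltaOrd_lt_omega1 hY)) (h (toZFSet_mem_of_lt_deltaOrd ho))

end DeltaOrd

def closurePoints (f : Ordinal.{0} → Ordinal.{0}) : Set Ordinal.{0} :=
  {δ | δ < omega1 ∧ IsSuccLimit δ ∧ ∀ γ < δ, f γ < δ}

theorem exists_mem_closurePoints_gt {f : Ordinal.{0} → Ordinal.{0}}
    (hf : ∀ β < omega1, f β < omega1) (hmono : MonotoneOn f (Iio omega1)) {β : Ordinal.{0}}
    (hβ : β < omega1) : ∃ δ ∈ closurePoints f, β < δ := by
  -- `h` dominates both `f` and `succ`, so the limit of its iterates from `β` is a closure point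
  set h : Ordinal.{0} → Ordinal.{0} := fun γ => succ (max (f γ) γ)
  have lt_h : ∀ γ, γ < h γ := fun γ => lt_succ_of_le (le_max_right _ _)
  have hh : ∀ γ < omega1, h γ < omega1 := fun γ hγ =>
    omega1_isSuccLimit.succ_lt (max_lt (hf γ hγ) hγ)
  have hiter : ∀ n, h^[n] β < omega1 := fun n => by
    induction n with
    | zero => exact hβ
    | succ n ih => rw [Function.iterate_succ_apply']; exact hh _ ih
  have key : ∀ o < Ordinal.nfp h β, h o < Ordinal.nfp h β := by
    intro o ho
    obtain ⟨n, hn⟩ := Ordinal.lt_nfp_iff.1 ho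
    have hle := Ordinal.iterate_le_nfp h β (n + 2)
    rw [Function.iterate_succ_apply', Function.iterate_succ_apply'] at hle
    calc h o ≤ h (h^[n] β) :=
          succ_le_succ (max_le_max (hmono (hn.trans (hiter n)) (hiter n) hn.le) hn.le)
      _ < h (h (h^[n] β)) := lt_h _
      _ ≤ Ordinal.nfp h β := hle
  have hβδ : β < Ordinal.nfp h β := (lt_h β).trans_le (Ordinal.iterate_le_nfp h β 1)
  refine ⟨Ordinal.nfp h β,
    ⟨Ordinal.nfp_lt_ord aleph0_lt_cof_omega1 hh hβ, ?_, fun γ hγ => ?_⟩, hβδ⟩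
  · refine Ordinal.isSuccLimit_iff.2 ⟨(zero_le.trans_lt hβδ).ne',
      isSuccPrelimit_of_succ_lt fun o ho => ?_⟩
    exact (succ_le_succ (le_max_right _ _)).trans_lt (key o ho)
  · exact ((le_max_left _ _).trans_lt (lt_succ _)).trans (key γ hγ)

theorem isClubBelow_closurePoints {f : Ordinal.{0} → Ordinal.{0}}
    (hf : ∀ β < omega1, f β < omega1) (hmono : MonotoneOn f (Iio omega1)) :
    IsClubBelow (closurePoints f) omega1 := by
  refine ⟨fun δ hδ => hδ.1, fun α hα hα0 hacc => ⟨hα, ?_, fun β hβ => ?_⟩,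
    fun β hβ => exists_mem_closurePoints_gt hf hmono hβ⟩
  · refine Ordinal.isSuccLimit_iff.2 ⟨hα0, isSuccPrelimit_of_succ_lt fun β hβ => ?_⟩
    obtain ⟨γ, -, hβγ, hγα⟩ := hacc β hβ
    exact (succ_le_of_lt hβγ).trans_lt hγα
  · obtain ⟨γ, hγ, hβγ, hγα⟩ := hacc β hβ
    exact (hγ.2.2 β hβγ).trans hγα

section OrdinalSeeds

variable {R : List ZFSet.{0} → Set ZFSet.{0}} {X₀ : Set ZFSet.{0}}

theorem RuleClosed.ordinalsDownClosed
    (hord : ∀ o < omega1, ∀ o' < o, o'.toZFSet ∈ R [o.toZFSet]) {Y : Set ZFSet.{0}}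
    (hY : RuleClosed R Y) : OrdinalsDownClosed Y := fun o o' ho' ho hoY =>
  hY [o.toZFSet] (by simpa using hoY) (hord o ho o' ho')

theorem ruleHull_union_Iio_countable (hR : ∀ l, (R l).Countable) (hX₀ : X₀.Countable)
    {β : Ordinal.{0}} (hβ : β < omega1) : (ruleHull R (X₀ ∪ toZFSet '' Iio β)).Countable :=
  ruleHull_countable hR (hX₀.union ((countable_Iio_iff_lt_omega1.2 hβ).image _))

theorem deltaOrd_ruleHull_eq_of_mem_closurePoints (hR : ∀ l, (R l).Countable)
    (hord : ∀ o < omega1, ∀ o' < o, o'.toZFSet ∈ R [o.toZFSet]) (hX₀ : X₀.Countable)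
    {δ : Ordinal.{0}}
    (hδ : δ ∈ closurePoints fun β => deltaOrd (ruleHull R (X₀ ∪ toZFSet '' Iio β))) :
    deltaOrd (ruleHull R (X₀ ∪ toZFSet '' Iio δ)) = δ := by
  obtain ⟨hδω, hlim, hclosed⟩ := hδ
  refine deltaOrd_eq_of_mem_of_notMem (fun o ho => subset_ruleHull _ (Or.inr ⟨o, ho, rfl⟩))
    fun hmem => ?_
  -- as `δ` is a limit, `δ` would already lie in some hull below `δ`, whose `deltaOrd` is `< δ`
  have : Nonempty (Iio δ) := ⟨⟨0, hlim.bot_lt⟩⟩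
  have hunion :
      X₀ ∪ toZFSet '' Iio δ ⊆ ⋃ γ : Iio δ, X₀ ∪ toZFSet '' Iio (γ : Ordinal.{0}) := by
    rintro z (hz | ⟨o, ho, rfl⟩)
    · exact mem_iUnion.2 ⟨⟨0, hlim.bot_lt⟩, Or.inl hz⟩
    · exact mem_iUnion.2 ⟨⟨succ o, hlim.succ_lt ho⟩, Or.inr ⟨o, lt_succ o, rfl⟩⟩
  have hdir : Directed (· ⊆ ·) fun γ : Iio δ => X₀ ∪ toZFSet '' Iio (γ : Ordinal.{0}) :=
    Monotone.directed_le fun _ _ h => union_subset_union_right _ (image_mono (Iio_subset_Iio h))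
  obtain ⟨⟨γ, hγ⟩, hγmem⟩ :=
    mem_iUnion.1 ((ruleHull_iUnion hdir).subset (ruleHull_mono hunion hmem))
  exact (hclosed γ hγ).not_gt (lt_deltaOrd_of_toZFSet_mem
    (ruleHull_union_Iio_countable hR hX₀ (hγ.trans hδω))
    ((ruleClosed_ruleHull _).ordinalsDownClosed hord) hδω hγmem)

theorem exists_isClubBelow_deltaOrd_ruleHull_eq (hR : ∀ l, (R l).Countable)
    (hord : ∀ o < omega1, ∀ o' < o, o'.toZFSet ∈ R [o.toZFSet]) (hX₀ : X₀.Countable) :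
    ∃ C, IsClubBelow C omega1 ∧
      ∀ δ ∈ C, deltaOrd (ruleHull R (X₀ ∪ toZFSet '' Iio δ)) = δ := by
  refine ⟨_, isClubBelow_closurePoints (fun β hβ => ?_) (fun β hβ β' hβ' h => ?_),
    fun δ hδ => deltaOrd_ruleHull_eq_of_mem_closurePoints hR hord hX₀ hδ⟩
  · exact deltaOrd_lt_omega1 (ruleHull_union_Iio_countable hR hX₀ hβ)
  · exact deltaOrd_mono (ruleHull_union_Iio_countable hR hX₀ hβ)
      (ruleHull_union_Iio_countable hR hX₀ hβ') ((ruleClosed_ruleHull _).ordinalsDownClosed hord)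
      (ruleHull_mono (union_subset_union_right _ (image_mono (Iio_subset_Iio h))))

end OrdinalSeeds

section TarskiVaught

instance (n : ℕ) : Countable (Lmem.Relations n) :=
  match n with
  | 0 | 1 => inferInstanceAs (Countable Empty)
  | 2 => inferInstanceAs (Countable PUnit)
  | _ + 3 => inferInstanceAs (Countable Empty)

instance (n : ℕ) : Countable (Lmem.Functions n) := inferInstanceAs (Countable Empty)

instance : Countable Lmem.Symbols := inferInstanceAs (Countable (_ ⊕ _))

instance (n : ℕ) : Countable (Lmem.BoundedFormula Empty n) :=
  Function.Injective.countable (f := fun φ => (⟨n, φ⟩ : Σ n, Lmem.BoundedFormula Empty n))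
    sigma_mk_injective

variable (A : VModel)

noncomputable def skolem {n : ℕ} (φ : Lmem.BoundedFormula Empty (n + 1))
    (v : Fin n → ZFSet.{0}) : ZFSet.{0} :=
  Classical.epsilon fun x => x ∈ A.carrier ∧ A.BRealize φ (Fin.snoc v x)

variable {A}

theorem skolem_spec {n : ℕ} {φ : Lmem.BoundedFormula Empty (n + 1)} {v : Fin n → ZFSet.{0}}
    (h : ∃ x ∈ A.carrier, A.BRealize φ (Fin.snoc v x)) :
    skolem A φ v ∈ A.carrier ∧ A.BRealize φ (Fin.snoc v (skolem A φ v)) :=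
  Classical.epsilon_spec h

theorem interpTerm_mem {n : ℕ} {S : Set ZFSet.{0}} {v : Fin n → ZFSet.{0}} (hv : ∀ i, v i ∈ S) :
    ∀ t : Lmem.Term (Empty ⊕ Fin n), interpTerm v t ∈ S
  | .var (Sum.inr i) => hv i
  | .var (Sum.inl e) => e.elim
  | .func f _ => isEmptyElim f

theorem forall_snoc_mem {n : ℕ} {S : Set ZFSet.{0}} {v : Fin n → ZFSet.{0}} {x : ZFSet.{0}}
    (hv : ∀ i, v i ∈ S) (hx : x ∈ S) : ∀ i, (Fin.snoc v x : Fin (n + 1) → ZFSet.{0}) i ∈ S :=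
  Fin.forall_fin_succ'.2 ⟨by simpa using hv, by simpa using hx⟩

theorem bRealize_restrictTo_iff {Y : Set ZFSet.{0}}
    (hY : ∀ {n : ℕ} (φ : Lmem.BoundedFormula Empty (n + 1)) (v : Fin n → ZFSet.{0}),
      (∀ i, v i ∈ Y) → skolem A φ v ∈ Y)
    {n : ℕ} (φ : Lmem.BoundedFormula Empty n) :
    ∀ v : Fin n → ZFSet.{0}, (∀ i, v i ∈ Y ∩ A.carrier) →
      ((restrictTo A Y).BRealize φ v ↔ A.BRealize φ v) := by
  induction φ with
  | falsum => exact fun _ _ => Iff.rfl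
  | equal => exact fun _ _ => Iff.rfl
  | rel => exact fun _ hv => ⟨And.left, fun h => ⟨h, fun _ => interpTerm_mem hv _⟩⟩
  | imp φ ψ ihφ ihψ => exact fun v hv => imp_congr (ihφ v hv) (ihψ v hv)
  | all ψ ih =>
    refine fun v hv =>
      ⟨fun h x hx => ?_, fun h x hx => (ih _ (forall_snoc_mem hv hx)).2 (h x hx.2)⟩
    -- Tarski–Vaught: the Skolem witness for `¬ψ` would be a counterexample inside `Y`
    by_contra hneg
    obtain ⟨hsA, hs⟩ := skolem_spec (φ := ψ.not) (v := v) ⟨x, hx, hneg⟩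
    have hsY : skolem A ψ.not v ∈ Y ∩ A.carrier := ⟨hY _ v fun i => (hv i).1, hsA⟩
    exact hs ((ih _ (forall_snoc_mem hv hsY)).1 (h _ hsY))

theorem elemSub_restrictTo {Y : Set ZFSet.{0}}
    (hY : ∀ {n : ℕ} (φ : Lmem.BoundedFormula Empty (n + 1)) (v : Fin n → ZFSet.{0}),
      (∀ i, v i ∈ Y) → skolem A φ v ∈ Y) :
    ElemSub (restrictTo A Y) A :=
  ⟨inter_subset_right, fun _ _ _ hv => ⟨And.left, fun h => ⟨h, hv⟩⟩,
    fun _ φ v hv => bRealize_restrictTo_iff hY φ v hv⟩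

end TarskiVaught

section Capturing

noncomputable def zfsetOfOrdinals (S : Set Ordinal.{0}) : ZFSet.{0} :=
  ZFSet.sep (fun x => x.rank ∈ S) omega1.toZFSet

theorem mem_zfsetOfOrdinals {S : Set Ordinal.{0}} {x : ZFSet.{0}} :
    x ∈ zfsetOfOrdinals S ↔ ∃ o < omega1, o ∈ S ∧ o.toZFSet = x := by
  simp only [zfsetOfOrdinals, ZFSet.mem_sep, Ordinal.mem_toZFSet_iff]
  constructor
  · rintro ⟨⟨o, ho, rfl⟩, hS⟩
    exact ⟨o, ho, by simpa using hS, rfl⟩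
  · rintro ⟨o, ho, hS, rfl⟩
    exact ⟨⟨o, ho, rfl⟩, by simpa using hS⟩

theorem zStat_zfsetOfOrdinals {S : Set Ordinal.{0}} (hS : StatBelowOmega1 S) :
    zStat (zfsetOfOrdinals S) := by
  refine ⟨fun x hx => ?_, fun C hC => ?_⟩
  · obtain ⟨o, ho, -, rfl⟩ := mem_zfsetOfOrdinals.1 hx
    exact ⟨ZFSet.isOrdinal_toZFSet o, by rwa [Ordinal.rank_toZFSet]⟩
  · obtain ⟨o, hoS, hoC⟩ := hS.2 C hC
    exact ⟨o.toZFSet, mem_zfsetOfOrdinals.2 ⟨o, hS.1 hoS, hoS, rfl⟩,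
      by rwa [Ordinal.rank_toZFSet]⟩

theorem exists_toSet_eq {Y : Set ZFSet.{0}} (hY : Y.Countable) :
    ∃ m : ZFSet.{0}, m.toSet = Y := by
  have := hY.to_subtype
  exact ⟨ZFSet.range ((↑) : Y → ZFSet.{0}), (ZFSet.coe_range _).trans Subtype.range_coe⟩

-- The last family of rules makes `Y ∩ ω₁` an initial segment for every closed `Y`, so that
-- `deltaOrd Y` is `Y ∩ ω₁`.
def hullRules (A : VModel) (F : List ZFSet.{0} → ZFSet.{0}) (l : List ZFSet.{0}) :
    Set ZFSet.{0} :=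
  insert (F l)
    ((⋃ (n : ℕ) (φ : Lmem.BoundedFormula Empty (n + 1)), skolem A φ '' {v | List.ofFn v = l}) ∪
      ⋃ o ∈ {o | o < omega1 ∧ l = [o.toZFSet]}, toZFSet '' Iio o)

variable {A : VModel} {F : List ZFSet.{0} → ZFSet.{0}}

theorem hullRules_countable (l : List ZFSet.{0}) : (hullRules A F l).Countable := by
  refine (Countable.union ?_ ?_).insert _
  · refine countable_iUnion fun n => countable_iUnion fun φ =>
      (Subsingleton.image ?_ _).countable
    exact fun v hv w hw => List.ofFn_injective (hv.trans hw.symm)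
  · refine Countable.biUnion (Subsingleton.countable ?_) fun o ho =>
      (countable_Iio_iff_lt_omega1.2 ho.1).image _
    rintro o ⟨-, rfl⟩ o' ⟨-, h⟩
    exact Ordinal.toZFSet_injective (List.singleton_inj.1 h)

theorem toZFSet_mem_hullRules (o : Ordinal.{0}) (ho : o < omega1) (o' : Ordinal.{0})
    (ho' : o' < o) :
    o'.toZFSet ∈ hullRules A F [o.toZFSet] :=
  Or.inr (Or.inr (mem_biUnion (x := o) ⟨ho, rfl⟩ ⟨o', ho', rfl⟩))

theorem RuleClosed.apply_mem {Y : Set ZFSet.{0}} (hY : RuleClosed (hullRules A F) Y)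
    {l : List ZFSet.{0}} (hl : ∀ x ∈ l, x ∈ Y) : F l ∈ Y :=
  hY l hl (mem_insert _ _)

theorem RuleClosed.skolem_mem {Y : Set ZFSet.{0}} (hY : RuleClosed (hullRules A F) Y) {n : ℕ}
    (φ : Lmem.BoundedFormula Empty (n + 1)) (v : Fin n → ZFSet.{0}) (hv : ∀ i, v i ∈ Y) :
    skolem A φ v ∈ Y :=
  hY (List.ofFn v) (by simpa [List.mem_ofFn] using hv)
    (Or.inr (Or.inl (mem_iUnion₂.2 ⟨n, φ, v, rfl, rfl⟩)))

end Capturing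

theorem statement_19_general (θ : Cardinal.{0})
    (D : Set ZFSet.{0})
    (hpredense : ∀ S : ZFSet.{0}, zStat S → ∃ T ∈ D, zStat (S ∩ T)) :
    ∀ S : Set Ordinal.{0}, StatBelowOmega1 S →
      ∀ F : List ZFSet.{0} → ZFSet.{0},
        (∀ l : List ZFSet.{0}, (∀ x ∈ l, x ∈ HSet θ) → F l ∈ HSet θ) →
        ∃ m : ZFSet.{0}, m.toSet.Countable ∧
          ElemSub (restrictTo (memModel (HSet θ)) m.toSet) (memModel (HSet θ)) ∧
          Captures D m ∧
          (∀ l : List ZFSet.{0}, (∀ x ∈ l, x ∈ m) → F l ∈ m) ∧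
          deltaOrd m.toSet ∈ S := by
  intro S hS F _
  obtain ⟨T, hTD, hST⟩ := hpredense _ (zStat_zfsetOfOrdinals hS)
  obtain ⟨C, hC, hCδ⟩ := exists_isClubBelow_deltaOrd_ruleHull_eq
    (hullRules_countable (A := memModel (HSet θ)) (F := F)) toZFSet_mem_hullRules
    (countable_singleton T)
  obtain ⟨x, hx, hxC⟩ := hST.2 C hC
  obtain ⟨hxS, hxT⟩ := ZFSet.mem_inter.1 hx
  obtain ⟨δ, hδω, hδS, rfl⟩ := mem_zfsetOfOrdinals.1 hxS
  rw [Ordinal.rank_toZFSet] at hxC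
  set R := hullRules (memModel (HSet θ)) F
  set Y := ruleHull R ({T} ∪ toZFSet '' Iio δ)
  have hYc : Y.Countable :=
    ruleHull_union_Iio_countable hullRules_countable (countable_singleton T) hδω
  have hY : RuleClosed R Y := ruleClosed_ruleHull _
  have hYδ : deltaOrd Y = δ := hCδ δ hxC
  obtain ⟨m, hm⟩ := exists_toSet_eq hYc
  have hmY : ∀ x, x ∈ m ↔ x ∈ Y := fun x => by rw [← hm]; rfl
  refine ⟨m, hm ▸ hYc, hm ▸ elemSub_restrictTo hY.skolem_mem,
    ⟨T, hTD, (hmY T).2 (subset_ruleHull _ (Or.inl rfl)), δ.toZFSet, hxT, ?_⟩,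
    fun l hl => (hmY _).2 (hY.apply_mem fun x hx => (hmY x).1 (hl x hx)), by rwa [hm, hYδ]⟩
  rw [Ordinal.rank_toZFSet, hm, hYδ]

/-- if `D` is a predense family of stationary subsets of `ω₁` and
`θ ≥ ω₂` is regular, then `U := {M ≺ H_θ : M countable, M captures D}` is projectively
stationary: for every stationary `S ⊆ ω₁` and every `F : H_θ^{<ω} → H_θ` there is a
countable `M ≺ H_θ` in `U`, closed under `F`, with `δ_M ∈ S`. -/
theorem statement_19 (θ : Cardinal.{0}) (hreg : θ.IsRegular)
    (hθ : Cardinal.aleph 2 ≤ θ)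
    (D : Set ZFSet.{0}) (hDstat : ∀ s ∈ D, zStat s)
    (hpredense : ∀ S : ZFSet.{0}, zStat S → ∃ T ∈ D, zStat (S ∩ T)) :
    ∀ S : Set Ordinal.{0}, StatBelowOmega1 S →
      ∀ F : List ZFSet.{0} → ZFSet.{0},
        (∀ l : List ZFSet.{0}, (∀ x ∈ l, x ∈ HSet θ) → F l ∈ HSet θ) →
        ∃ m : ZFSet.{0}, m.toSet.Countable ∧
          ElemSub (restrictTo (memModel (HSet θ)) m.toSet) (memModel (HSet θ)) ∧
          Captures D m ∧
          (∀ l : List ZFSet.{0}, (∀ x ∈ l, x ∈ m) → F l ∈ m) ∧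
          deltaOrd m.toSet ∈ S :=
  statement_19_general θ D hpredense

end NSF
end
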